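/- arXiv:2510.17140 — 12 statements merged into one kernel-verified Lean document; each statement's English description precedes it below -/
import Mathlib

section
/- Let d_S, d_E be positive integers, let ρ_E be a d_E×d_E complex positive semidefinite matrix with trace 1, and let V i (for i : Fin d_S) be unitary d_E×d_E complex matrices. If the zero-discord condition holds, i.e. the matrices V i * ρ_E * (V j)ᴴ and V k * ρ_E * (V l)ᴴ commute for all i, j, k, l, then the dephasing factors φ i j = Trace(V i * ρ_E * (V j)ᴴ) are of mixed-unitary form: there exist N ≥ 1, weights p : Fin N → ℝ with p n ≥ 0 and ∑ n, p n = 1, and phases θ : Fin d_S → Fin N → ℝ, such that φ i j = ∑ n, (p n) * Complex.exp (Complex.I * (θ i n − θ j n)) for all i, j. (Theorem 1, general version of Appendix A: no full-rank or non-degeneracy assumption on ρ_E.) -/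
open Matrix ComplexOrder
open Module Module.End Submodule LinearMap

lemma aux_joint (E : Type*) [NormedAddCommGroup E] [InnerProductSpace ℂ E]
    [FiniteDimensional ℂ E] {ι : Type*} (T : ι → E →ₗ[ℂ] E)
    (hT : ∀ x, (T x).IsSymmetric) (hC : ∀ x y, Commute (T x) (T y)) :
    ∃ (b : OrthonormalBasis (Fin (finrank ℂ E)) ℂ E) (χ : Fin (finrank ℂ E) → ι → ℂ),
      ∀ k x, T x (b k) = χ k x • b k := by
  classical
  have htop : ⨆ χ : ι → ℂ, ⨅ x, eigenspace (T x) (χ x) = ⊤ :=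
    LinearMap.IsSymmetric.iSup_iInf_eq_top_of_commute hT (fun x y _ => hC x y)
  have hfam := LinearMap.IsSymmetric.orthogonalFamily_iInf_eigenspaces hT
  obtain ⟨s, hs⟩ : ∃ s : Finset (ι → ℂ),
      ⨆ χ ∈ s, ⨅ x, eigenspace (T x) (χ x) = ⊤ := by
    have B := finBasis ℂ E
    have hmem : ∀ i, B i ∈ ⨆ χ : ι → ℂ, ⨅ x, eigenspace (T x) (χ x) := by
      intro i; rw [htop]; exact Submodule.mem_top
    choose f hf using fun i => (Submodule.mem_iSup_iff_exists_finset).mp (hmem i)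
    refine ⟨Finset.univ.biUnion f, le_antisymm le_top ?_⟩
    rw [← B.span_eq]
    refine Submodule.span_le.mpr ?_
    rintro _ ⟨i, rfl⟩
    have hle : (⨆ χ ∈ f i, ⨅ x, eigenspace (T x) (χ x)) ≤
        ⨆ χ ∈ Finset.univ.biUnion f, ⨅ x, eigenspace (T x) (χ x) :=
      biSup_mono (fun χ hχ => Finset.mem_biUnion.mpr ⟨i, Finset.mem_univ i, hχ⟩)
    exact hle (hf i)
  have hsub : (⨆ χ : {x // x ∈ s}, ⨅ x, eigenspace (T x) ((χ : ι → ℂ) x)) = ⊤ := by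
    rw [← hs, iSup_subtype']
  have hfam' := hfam.comp (Subtype.val_injective :
    Function.Injective ((↑) : {x // x ∈ s} → (ι → ℂ)))
  have hint : DirectSum.IsInternal
      (fun χ : {x // x ∈ s} => ⨅ x, eigenspace (T x) ((χ : ι → ℂ) x)) := by
    rw [OrthogonalFamily.isInternal_iff hfam', hsub, Submodule.top_orthogonal_eq_bot]
  refine ⟨hint.subordinateOrthonormalBasis rfl hfam',
    fun k => ((hint.subordinateOrthonormalBasisIndex rfl k hfam' : {x // x ∈ s}) : ι → ℂ),
    fun k x => ?_⟩
  have hmem := hint.subordinateOrthonormalBasis_subordinate rfl k hfam'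
  have := (Submodule.mem_iInf _).mp hmem x
  exact mem_eigenspace_iff.mp this

lemma aux_psd_inner {n : ℕ} (M : Matrix (Fin n) (Fin n) ℂ) (hM : M.PosSemidef)
    (x : EuclideanSpace ℂ (Fin n)) : 0 ≤ (inner ℂ x (Matrix.toEuclideanLin M x) : ℂ) := by
  have h := (posSemidef_iff_dotProduct_mulVec.mp hM).2 ((WithLp.equiv 2 (Fin n → ℂ)) x)
  have e : (inner ℂ x (Matrix.toEuclideanLin M x) : ℂ)
      = dotProduct (star ((WithLp.equiv 2 (Fin n → ℂ)) x))
        (M.mulVec ((WithLp.equiv 2 (Fin n → ℂ)) x)) := by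
    simp [Matrix.toEuclideanLin_apply, PiLp.inner_apply, dotProduct,
      RCLike.inner_apply, mul_comm]
  rw [e]; exact h

set_option maxHeartbeats 1600000 in
/-- **Theorem 1 (general version, Appendix A).**
If the zero-discord condition holds, the dephasing factors
`φ i j = Trace (V i * ρE * (V j)ᴴ)` are of mixed-unitary form. -/
theorem zero_discord_implies_mixed_unitary_dephasing_factors
    (dS dE : ℕ) (hdS : 0 < dS) (hdE : 0 < dE)
    (ρE : Matrix (Fin dE) (Fin dE) ℂ)
    (hρE : ρE.PosSemidef) (htr : ρE.trace = 1)
    (V : Fin dS → Matrix (Fin dE) (Fin dE) ℂ)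
    (hV : ∀ i, V i ∈ Matrix.unitaryGroup (Fin dE) ℂ)
    (hzd : ∀ i j k l : Fin dS,
      Commute (V i * ρE * (V j)ᴴ) (V k * ρE * (V l)ᴴ)) :
    ∃ (N : ℕ) (_ : 1 ≤ N) (p : Fin N → ℝ) (θ : Fin dS → Fin N → ℝ),
      (∀ n, 0 ≤ p n) ∧ (∑ n, p n = 1) ∧
      ∀ i j : Fin dS, (V i * ρE * (V j)ᴴ).trace =
        ∑ n, (p n : ℂ) * Complex.exp (Complex.I * ((θ i n : ℂ) - (θ j n : ℂ))) := by
  classical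
  set A : Fin dS → Fin dS → Matrix (Fin dE) (Fin dE) ℂ :=
    fun i j => V i * ρE * (V j)ᴴ with hAdef
  set T : Fin dS → Fin dS → (EuclideanSpace ℂ (Fin dE) →ₗ[ℂ] EuclideanSpace ℂ (Fin dE)) :=
    fun i j => Matrix.toEuclideanLin (A i j) with hTdef
  -- basic matrix facts
  have hunit : ∀ l, (V l)ᴴ * V l = 1 := by
    intro l
    have := (Unitary.mem_iff.mp (hV l)).1
    rwa [Matrix.star_eq_conjTranspose] at this
  have key2 : ∀ (l) (M : Matrix (Fin dE) (Fin dE) ℂ), (V l)ᴴ * (V l * M) = M := by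
    intro l M; rw [← Matrix.mul_assoc, hunit, Matrix.one_mul]
  have hAadj : ∀ i j, (A i j)ᴴ = A j i := by
    intro i j
    simp only [hAdef, Matrix.conjTranspose_mul, Matrix.conjTranspose_conjTranspose,
      hρE.1.eq, Matrix.mul_assoc]
  have hmulL : ∀ M N : Matrix (Fin dE) (Fin dE) ℂ,
      Matrix.toEuclideanLin (M * N) = Matrix.toEuclideanLin M * Matrix.toEuclideanLin N := by
    intro M N
    rw [Matrix.toEuclideanLin_eq_toLin,
      Matrix.toLin_mul (PiLp.basisFun 2 ℂ (Fin dE)) (PiLp.basisFun 2 ℂ (Fin dE)), Module.End.mul_eq_comp]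
  have hTC : ∀ i j k l, Commute (T i j) (T k l) := by
    intro i j k l
    show T i j * T k l = T k l * T i j
    rw [hTdef]
    simp only
    rw [← hmulL, ← hmulL, (hzd i j k l).eq]
  have hTadj : ∀ i j, LinearMap.adjoint (T i j) = T j i := by
    intro i j
    rw [hTdef]; simp only
    rw [← Matrix.toEuclideanLin_conjTranspose_eq_adjoint, hAadj]
  -- the Hermitian family
  set H : (Fin dS × Fin dS × Bool) → (EuclideanSpace ℂ (Fin dE) →ₗ[ℂ] EuclideanSpace ℂ (Fin dE)) :=
    fun x => if x.2.2 then (Complex.I/2) • (T x.2.1 x.1 - T x.1 x.2.1)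
      else ((1:ℂ)/2) • (T x.1 x.2.1 + T x.2.1 x.1) with hHdef
  have hHsym : ∀ x, (H x).IsSymmetric := by
    intro ⟨i, j, bx⟩
    rw [LinearMap.isSymmetric_iff_isSelfAdjoint]
    show star _ = _
    cases bx <;> simp only [hHdef, if_true, if_false, Bool.false_eq_true, ite_false, ite_true]
    · rw [star_smul, star_add, LinearMap.star_eq_adjoint, LinearMap.star_eq_adjoint,
        hTadj, hTadj]
      have : star ((1:ℂ)/2) = (1:ℂ)/2 := by simp
      rw [this]; module
    · rw [star_smul, star_sub, LinearMap.star_eq_adjoint, LinearMap.star_eq_adjoint,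
        hTadj, hTadj]
      have : star (Complex.I/2) = -(Complex.I/2) := by
        norm_num [Complex.ext_iff]
      rw [this]; match_scalars <;> norm_num
  have hHC : ∀ x y, Commute (H x) (H y) := by
    intro ⟨i, j, bx⟩ ⟨k, l, by'⟩
    cases bx <;> cases by' <;>
      simp only [hHdef, if_true, if_false, Bool.false_eq_true, ite_false, ite_true]
    · exact ((((hTC i j k l).add_right (hTC i j l k)).add_left
          ((hTC j i k l).add_right (hTC j i l k))).smul_left _).smul_right _
    · exact ((((hTC i j l k).sub_right (hTC i j k l)).add_left
          ((hTC j i l k).sub_right (hTC j i k l))).smul_left _).smul_right _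
    · exact ((((hTC j i k l).add_right (hTC j i l k)).sub_left
          ((hTC i j k l).add_right (hTC i j l k))).smul_left _).smul_right _
    · exact ((((hTC j i l k).sub_right (hTC j i k l)).sub_left
          ((hTC i j l k).sub_right (hTC i j k l))).smul_left _).smul_right _
  -- joint eigenbasis
  obtain ⟨b0, χ0, hb0⟩ := aux_joint (EuclideanSpace ℂ (Fin dE)) H hHsym hHC
  have hrk : finrank ℂ (EuclideanSpace ℂ (Fin dE)) = dE := finrank_euclideanSpace_fin
  let b : OrthonormalBasis (Fin dE) ℂ (EuclideanSpace ℂ (Fin dE)) := b0.reindex (finCongr hrk)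
  let χ : Fin dE → (Fin dS × Fin dS × Bool) → ℂ := fun k => χ0 ((finCongr hrk).symm k)
  have hb : ∀ k x, H x (b k) = χ k x • b k := by
    intro k x
    rw [OrthonormalBasis.reindex_apply]
    exact hb0 _ x
  set lam : Fin dS → Fin dS → Fin dE → ℂ :=
    fun i j k => χ k (i, j, false) + Complex.I * χ k (i, j, true) with hlamdef
  have hEig : ∀ i j k, T i j (b k) = lam i j k • b k := by
    intro i j k
    have h1 := hb k (i, j, false)
    have h2 := hb k (i, j, true)
    simp only [hHdef, Bool.false_eq_true, ite_false, ite_true, LinearMap.smul_apply,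
      LinearMap.add_apply, LinearMap.sub_apply] at h1 h2
    have e1 : T i j (b k) = ((1:ℂ)/2) • (T i j (b k) + T j i (b k)) +
        Complex.I • ((Complex.I/2) • (T j i (b k) - T i j (b k))) := by
      match_scalars <;> (ring_nf; rw [Complex.I_sq]; norm_num)
    rw [e1, h1, h2, hlamdef]
    simp only [smul_smul, ← add_smul]
  -- scalar manipulation tools
  have hbne : ∀ k, b k ≠ 0 := fun k => b.orthonormal.ne_zero k
  have hsceq : ∀ (k : Fin dE) {a c : ℂ}, a • b k = c • b k → a = c := by
    intro k a c h
    have h2 : (a - c) • b k = 0 := by rw [sub_smul, h, sub_self]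
    rcases smul_eq_zero.mp h2 with h3 | h3
    · exact sub_eq_zero.mp h3
    · exact absurd h3 (hbne k)
  have hinner1 : ∀ k, (inner ℂ (b k) (b k) : ℂ) = 1 := by
    intro k
    have := orthonormal_iff_ite.mp b.orthonormal k k
    simpa using this
  have hlaminner : ∀ i j k, (inner ℂ (b k) (T i j (b k)) : ℂ) = lam i j k := by
    intro i j k; rw [hEig, inner_smul_right, hinner1, mul_one]
  have hconj : ∀ i j k, lam j i k = (starRingEnd ℂ) (lam i j k) := by
    intro i j k
    rw [← hlaminner j i k, ← hTadj i j, LinearMap.adjoint_inner_right, hEig,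
      inner_smul_left, hinner1, mul_one]
  have hprod : ∀ i j i' j' k,
      Matrix.toEuclideanLin (A i j * A i' j') (b k) = (lam i j k * lam i' j' k) • b k := by
    intro i j i' j' k
    rw [hmulL, Module.End.mul_apply]
    show T i j (T i' j' (b k)) = _
    rw [hEig, _root_.map_smul, hEig, smul_smul, mul_comm]
  have hseq : ∀ (i j i' j' a c a' c' : Fin dS) (k : Fin dE),
      A i j * A i' j' = A a c * A a' c' →
      lam i j k * lam i' j' k = lam a c k * lam a' c' k := by
    intro i j i' j' a c a' c' k hm
    apply hsceq k
    rw [← hprod i j i' j' k, ← hprod a c a' c' k, hm]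
  -- matrix identities
  have m1 : ∀ i j i₀ : Fin dS, A i j * A j j = A i i₀ * A i₀ j := by
    intro i j i₀
    show (V i * ρE * (V j)ᴴ) * (V j * ρE * (V j)ᴴ) = (V i * ρE * (V i₀)ᴴ) * (V i₀ * ρE * (V j)ᴴ)
    simp only [Matrix.mul_assoc, key2]
  have m2 : ∀ i j : Fin dS, A i j * A j i = A i i * A i i := by
    intro i j
    show (V i * ρE * (V j)ᴴ) * (V j * ρE * (V i)ᴴ) = (V i * ρE * (V i)ᴴ) * (V i * ρE * (V i)ᴴ)
    simp only [Matrix.mul_assoc, key2]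
  -- positivity
  have hpos : ∀ (i : Fin dS) k, 0 ≤ lam i i k := by
    intro i k
    rw [← hlaminner i i k]
    have hPSD : (A i i).PosSemidef := hρE.mul_mul_conjTranspose_same (V i)
    exact aux_psd_inner (A i i) hPSD (b k)
  have hreal : ∀ (i : Fin dS) k, lam i i k = (((lam i i k).re : ℝ) : ℂ) := by
    intro i k
    have h := (Complex.nonneg_iff).mp (hpos i k)
    exact Complex.ext (by simp) (by simp [h.2.symm])
  have hiieq : ∀ (i j : Fin dS) k, lam i i k = lam j j k := by
    intro i j k
    have h1 := hseq i j j i i i i i k (m2 i j)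
    have h2 := hseq j i i j j j j j k (m2 j i)
    have h3 : lam i i k * lam i i k = lam j j k * lam j j k := by
      rw [← h1, ← h2]; ring
    obtain ⟨ri, h0i, hri⟩ : ∃ r : ℝ, 0 ≤ r ∧ lam i i k = (r : ℂ) :=
      ⟨(lam i i k).re, ((Complex.nonneg_iff).mp (hpos i k)).1, hreal i k⟩
    obtain ⟨rj, h0j, hrj⟩ : ∃ r : ℝ, 0 ≤ r ∧ lam j j k = (r : ℂ) :=
      ⟨(lam j j k).re, ((Complex.nonneg_iff).mp (hpos j k)).1, hreal j k⟩
    rw [hri, hrj] at h3 ⊢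
    have h4 : ri * ri = rj * rj := by exact_mod_cast h3
    norm_cast
    nlinarith [h0i, h0j, h4]
  -- the weights and phases
  set i₀ : Fin dS := ⟨0, hdS⟩ with hi0
  have htr1 : (A i₀ i₀).trace = 1 := by
    show (V i₀ * ρE * (V i₀)ᴴ).trace = 1
    rw [Matrix.trace_mul_cycle, hunit, Matrix.one_mul, htr]
  have htrace : ∀ i j, (A i j).trace = ∑ k, lam i j k := by
    intro i j
    have t1 : (A i j).trace = LinearMap.trace ℂ _ (T i j) := by
      show (A i j).trace = LinearMap.trace ℂ _ (Matrix.toEuclideanLin (A i j))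
      rw [Matrix.toEuclideanLin_eq_toLin,
        LinearMap.trace_eq_matrix_trace ℂ (PiLp.basisFun 2 ℂ (Fin dE)),
        LinearMap.toMatrix_toLin]
    rw [t1, LinearMap.trace_eq_matrix_trace ℂ b.toBasis, Matrix.trace]
    apply Finset.sum_congr rfl
    intro k _
    simp only [Matrix.diag_apply, LinearMap.toMatrix_apply, OrthonormalBasis.coe_toBasis,
      hEig i j k, _root_.map_smul, OrthonormalBasis.coe_toBasis_repr_apply,
      OrthonormalBasis.repr_self]
    simp [EuclideanSpace.single_apply]
  have hterm : ∀ i j k, lam i j k =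
      (((lam i₀ i₀ k).re : ℝ) : ℂ) *
        Complex.exp (Complex.I * ((((lam i i₀ k).arg : ℝ) : ℂ) - (((lam j i₀ k).arg : ℝ) : ℂ))) := by
    intro i j k
    set p : ℝ := (lam i₀ i₀ k).re with hp
    have hq : lam i₀ i₀ k = (p : ℂ) := hreal i₀ k
    have hp0 : 0 ≤ p := ((Complex.nonneg_iff).mp (hpos i₀ k)).1
    have habs : ∀ i : Fin dS, ‖lam i i₀ k‖ = p := by
      intro i
      have h1 := hseq i i₀ i₀ i i i i i k (m2 i i₀)
      rw [hconj i i₀ k, hiieq i i₀ k, hq, Complex.mul_conj] at h1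
      have h2 : Complex.normSq (lam i i₀ k) = p * p := by exact_mod_cast h1
      rw [Complex.norm_def, h2]
      exact Real.sqrt_mul_self hp0
    rcases eq_or_ne p 0 with h0 | h0
    · have h1 := hseq i j j i i i i i k (m2 i j)
      rw [hconj i j k, hiieq i i₀ k, hq, h0, Complex.mul_conj] at h1
      have h2 : Complex.normSq (lam i j k) = 0 := by
        have h3 : (Complex.normSq (lam i j k) : ℂ) = 0 := by rw [h1]; norm_num
        exact_mod_cast h3
      rw [Complex.normSq_eq_zero] at h2
      rw [h2, h0]
      simp
    · have hkey : ∀ i : Fin dS, lam i i₀ k =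
          (p : ℂ) * Complex.exp ((((lam i i₀ k).arg : ℝ) : ℂ) * Complex.I) := by
        intro i
        conv_lhs => rw [← Complex.norm_mul_exp_arg_mul_I (lam i i₀ k)]
        rw [habs i]
      have h1 := hseq i j j j i i₀ i₀ j k (m1 i j i₀)
      rw [hconj j i₀ k, hiieq j i₀ k, hq] at h1
      -- h1 : lam i j k * ↑p = lam i i₀ k * conj (lam j i₀ k)
      rw [hkey i, hkey j] at h1
      set a : ℝ := (lam i i₀ k).arg
      set c : ℝ := (lam j i₀ k).arg
      have hc : (starRingEnd ℂ) ((p : ℂ) * Complex.exp ((c : ℂ) * Complex.I)) =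
          (p : ℂ) * Complex.exp (-((c : ℂ) * Complex.I)) := by
        rw [_root_.map_mul, Complex.conj_ofReal, ← Complex.exp_conj, _root_.map_mul,
          Complex.conj_ofReal, Complex.conj_I, mul_neg]
      rw [hc] at h1
      have hexp : Complex.exp ((a : ℂ) * Complex.I) * Complex.exp (-((c : ℂ) * Complex.I)) =
          Complex.exp (Complex.I * ((a : ℂ) - (c : ℂ))) := by
        rw [← Complex.exp_add]; congr 1; ring
      have h2 : lam i j k * (p : ℂ) =
          ((p : ℂ) * Complex.exp (Complex.I * ((a : ℂ) - (c : ℂ)))) * (p : ℂ) := by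
        rw [h1, ← hexp]; ring
      exact mul_right_cancel₀ (Complex.ofReal_ne_zero.mpr h0) h2
  -- conclusion
  refine ⟨dE, hdE, fun k => (lam i₀ i₀ k).re, fun i k => (lam i i₀ k).arg,
    fun k => ((Complex.nonneg_iff).mp (hpos i₀ k)).1, ?_, ?_⟩
  · have hsum : ∑ k, lam i₀ i₀ k = 1 := by rw [← htrace]; exact htr1
    have hsum2 : ∑ k, (((lam i₀ i₀ k).re : ℝ) : ℂ) = 1 := by
      rw [← hsum]
      exact Finset.sum_congr rfl fun k _ => (hreal i₀ k).symm
    exact_mod_cast hsum2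
  · intro i j
    have : (V i * ρE * (V j)ᴴ).trace = (A i j).trace := rfl
    rw [this, htrace i j]
    exact Finset.sum_congr rfl fun k _ => hterm i j k
end

section
/- Let d_S, d_E be positive integers, let ρ_E be a d_E×d_E complex positive definite matrix with trace 1 whose d_E eigenvalues are pairwise distinct, and let V i (for i : Fin d_S) be unitary d_E×d_E complex matrices. If the zero-discord condition holds (V i * ρ_E * (V j)ᴴ commutes with V k * ρ_E * (V l)ᴴ for all i, j, k, l), then there exist weights p : Fin d_E → ℝ with p n ≥ 0 and ∑ n, p n = 1, and phases θ : Fin d_S → Fin d_E → ℝ, such that Trace(V i * ρ_E * (V j)ᴴ) = ∑ n, (p n) * Complex.exp (Complex.I * (θ i n − θ j n)) for all i, j. (Theorem 1, main-text version: ρ_E full-rank and non-degenerate, and the mixture can be taken over exactly d_E unitaries.) -/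
open Matrix ComplexOrder
set_option maxHeartbeats 1000000

lemma diag_of_commute {m : ℕ} (d : Fin m → ℂ) (hd : ∀ i j, i ≠ j → d i ≠ d j)
    (B : Matrix (Fin m) (Fin m) ℂ) (h : B * Matrix.diagonal d = Matrix.diagonal d * B) :
    B = Matrix.diagonal (fun i => B i i) := by
  ext i j
  by_cases hij : i = j
  · subst hij; simp
  · have := congrFun (congrFun h i) j
    rw [Matrix.mul_diagonal, Matrix.diagonal_mul] at this
    have hdd : d j ≠ d i := hd j i (Ne.symm hij)
    have : B i j * (d j - d i) = 0 := by ring_nf; linear_combination this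
    rcases mul_eq_zero.mp this with h0 | h0
    · simp [Matrix.diagonal, hij, h0]
    · exact absurd (sub_eq_zero.mp h0) hdd

/-- **Theorem 1 (main-text version).**
If `ρE` is positive definite with pairwise distinct eigenvalues and the
zero-discord condition holds, then the dephasing factors are of mixed-unitary
form with a mixture over exactly `d_E` unitaries. -/
theorem zero_discord_implies_mixed_unitary_dephasing_factors_nondegenerate
    (dS dE : ℕ) (hdS : 0 < dS) (hdE : 0 < dE)
    (ρE : Matrix (Fin dE) (Fin dE) ℂ)
    (hρE : ρE.PosDef) (htr : ρE.trace = 1)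
    (hdist : ∀ n m : Fin dE, n ≠ m → hρE.1.eigenvalues n ≠ hρE.1.eigenvalues m)
    (V : Fin dS → Matrix (Fin dE) (Fin dE) ℂ)
    (hV : ∀ i, V i ∈ Matrix.unitaryGroup (Fin dE) ℂ)
    (hzd : ∀ i j k l : Fin dS,
      Commute (V i * ρE * (V j)ᴴ) (V k * ρE * (V l)ᴴ)) :
    ∃ (p : Fin dE → ℝ) (θ : Fin dS → Fin dE → ℝ),
      (∀ n, 0 ≤ p n) ∧ (∑ n, p n = 1) ∧
      ∀ i j : Fin dS, (V i * ρE * (V j)ᴴ).trace =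
        ∑ n, (p n : ℂ) * Complex.exp (Complex.I * ((θ i n : ℂ) - (θ j n : ℂ))) := by
  classical
  set hH := hρE.1 with hHdef
  set lam : Fin dE → ℝ := hH.eigenvalues with hlam
  set W : Matrix (Fin dE) (Fin dE) ℂ := (hH.eigenvectorUnitary : Matrix (Fin dE) (Fin dE) ℂ)
    with hWdef
  set Λ : Matrix (Fin dE) (Fin dE) ℂ := Matrix.diagonal (fun n => (lam n : ℂ)) with hΛdef
  have hspec : ρE = W * Λ * Wᴴ := by
    have := hH.spectral_theorem
    rw [hΛdef, hWdef, ← Matrix.star_eq_conjTranspose]; exact this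
  have hlampos : ∀ n, 0 < lam n := fun n => hρE.eigenvalues_pos n
  -- unitaries
  set U : Fin dS → Matrix (Fin dE) (Fin dE) ℂ := fun i => V i * W with hUdef
  have hWmem : W ∈ Matrix.unitaryGroup (Fin dE) ℂ := (hH.eigenvectorUnitary).2
  have hUmem : ∀ i, U i ∈ Matrix.unitaryGroup (Fin dE) ℂ := fun i => mul_mem (hV i) hWmem
  have hU1 : ∀ i, (U i)ᴴ * U i = 1 := fun i => by
    rw [← Matrix.star_eq_conjTranspose]; exact (Unitary.mem_iff.mp (hUmem i)).1
  have hU2 : ∀ i, U i * (U i)ᴴ = 1 := fun i => by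
    rw [← Matrix.star_eq_conjTranspose]; exact (Unitary.mem_iff.mp (hUmem i)).2
  have hA : ∀ i j, V i * ρE * (V j)ᴴ = U i * Λ * (U j)ᴴ := by
    intro i j
    rw [hspec]
    simp only [hUdef, Matrix.conjTranspose_mul]
    noncomm_ring
  set i0 : Fin dS := ⟨0, hdS⟩ with hi0
  have cancel : ∀ i (X : Matrix (Fin dE) (Fin dE) ℂ), (U i)ᴴ * (U i * X) = X := by
    intro i X; rw [← Matrix.mul_assoc, hU1, one_mul]
  have cancel2 : ∀ i (X : Matrix (Fin dE) (Fin dE) ℂ), U i * ((U i)ᴴ * X) = X := by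
    intro i X; rw [← Matrix.mul_assoc, hU2, one_mul]
  set S : Fin dS → Matrix (Fin dE) (Fin dE) ℂ := fun i => (U i0)ᴴ * U i with hSdef
  -- S i commutes with Λ
  have hcomm : ∀ i, S i * Λ = Λ * S i := by
    intro i
    have h := hzd i i0 i0 i0
    rw [Commute, SemiconjBy, hA, hA] at h
    have h2 := congrArg (fun X => (U i0)ᴴ * X * U i0) h
    simp only [Matrix.mul_assoc, cancel, hU1, Matrix.mul_one] at h2
    -- h2 : (U i0)ᴴ * (U i * (Λ * Λ * ?)) = ...
    have h3 : S i * (Λ * Λ) = Λ * (S i * Λ) := by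
      simpa [hSdef, Matrix.mul_assoc, Matrix.mul_one] using h2
    set Λinv : Matrix (Fin dE) (Fin dE) ℂ := Matrix.diagonal (fun n => (lam n : ℂ)⁻¹)
      with hΛinvdef
    have hinv : Λ * Λinv = 1 := by
      have he : (fun n => (lam n : ℂ) * (lam n : ℂ)⁻¹) = fun _ => (1 : ℂ) :=
        funext fun n => mul_inv_cancel₀ (by exact_mod_cast (hlampos n).ne')
      rw [hΛdef, hΛinvdef, Matrix.diagonal_mul_diagonal, he, Matrix.diagonal_one]
    have h4 := congrArg (fun X => X * Λinv) h3
    simpa only [Matrix.mul_assoc, hinv, Matrix.mul_one] using h4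
  set s : Fin dS → Fin dE → ℂ := fun i n => S i n n with hsdef
  have hdiag : ∀ i, S i = Matrix.diagonal (s i) := by
    intro i
    exact diag_of_commute _ (fun n m hnm h => hdist n m hnm (Complex.ofReal_injective h)) _
      (hcomm i)
  have hSmem : ∀ i, S i * (S i)ᴴ = 1 := by
    intro i
    rw [hSdef]
    simp only [Matrix.conjTranspose_mul, Matrix.conjTranspose_conjTranspose,
      Matrix.mul_assoc, cancel2]
    exact hU1 i0
  have habs : ∀ i n, s i n * (starRingEnd ℂ) (s i n) = 1 := by
    intro i n
    have h1 := hSmem i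
    rw [hdiag i, Matrix.diagonal_conjTranspose, Matrix.diagonal_mul_diagonal] at h1
    have := congrFun (congrFun h1 n) n
    simpa using this
  set θ : Fin dS → Fin dE → ℝ := fun i n => (s i n).arg with hθdef
  have hexp : ∀ i n, s i n = Complex.exp ((θ i n : ℂ) * Complex.I) := by
    intro i n
    have hn : ‖s i n‖ = 1 := by
      have h2 : (Complex.normSq (s i n) : ℂ) = 1 := by rw [← Complex.mul_conj]; exact habs i n
      have h3 : Complex.normSq (s i n) = 1 := by exact_mod_cast h2
      have h4 : ‖s i n‖ ^ 2 = 1 := by rw [Complex.sq_norm]; exact h3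
      nlinarith [norm_nonneg (s i n)]
    have := Complex.norm_mul_exp_arg_mul_I (s i n)
    rw [hn] at this
    simpa [hθdef] using this.symm
  refine ⟨lam, θ, fun n => (hlampos n).le, ?_, ?_⟩
  · -- sum of eigenvalues is 1
    have h1 : (W * Λ * Wᴴ).trace = 1 := by rw [← hspec]; exact htr
    rw [Matrix.trace_mul_cycle] at h1
    have hW1 : Wᴴ * W = 1 := by
      rw [← Matrix.star_eq_conjTranspose]; exact (Unitary.mem_iff.mp hWmem).1
    rw [hW1, one_mul, hΛdef, Matrix.trace_diagonal] at h1
    exact_mod_cast h1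
  · intro i j
    have hUU : (U j)ᴴ * U i = (S j)ᴴ * S i := by
      rw [hSdef]
      simp only [Matrix.conjTranspose_mul, Matrix.conjTranspose_conjTranspose,
        Matrix.mul_assoc, cancel2]
    calc (V i * ρE * (V j)ᴴ).trace = (U i * Λ * (U j)ᴴ).trace := by rw [hA]
      _ = ((U j)ᴴ * (U i * Λ)).trace := by rw [← Matrix.trace_mul_comm, Matrix.mul_assoc]
      _ = ((S j)ᴴ * S i * Λ).trace := by rw [← Matrix.mul_assoc, hUU]
      _ = ∑ n, (lam n : ℂ) * Complex.exp (Complex.I * ((θ i n : ℂ) - (θ j n : ℂ))) := by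
          rw [hdiag i, hdiag j, Matrix.diagonal_conjTranspose, Matrix.diagonal_mul_diagonal,
            hΛdef, Matrix.diagonal_mul_diagonal, Matrix.trace_diagonal]
          refine Finset.sum_congr rfl (fun n _ => ?_)
          have h1 : Complex.exp (Complex.I * ((θ i n : ℂ) - (θ j n : ℂ)))
              = Complex.exp ((θ i n : ℂ) * Complex.I)
                * (starRingEnd ℂ) (Complex.exp ((θ j n : ℂ) * Complex.I)) := by
            rw [← Complex.exp_conj, ← Complex.exp_add]
            congr 1
            rw [_root_.map_mul, Complex.conj_ofReal, Complex.conj_I]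
            ring
          rw [h1, ← hexp, ← hexp]
          simp only [Pi.star_apply, RCLike.star_def]
          ring
end

section
/- Let d_S, d_E be positive integers, let ρ_E be a d_E×d_E complex positive semidefinite matrix with trace 1, and let V i (for i : Fin d_S) be unitary d_E×d_E complex matrices. Then the zero-discord condition (V i * ρ_E * (V j)ᴴ commutes with V k * ρ_E * (V l)ᴴ for all i, j, k, l) holds if and only if both of the following hold: (a) the qubit-like condition: V i * ρ_E * (V i)ᴴ = V j * ρ_E * (V j)ᴴ for all i, j (call the common value R); and (b) the corrected qutrit-like condition: R * ((V i * (V j)ᴴ) * (V k * (V l)ᴴ) − (V k * (V l)ᴴ) * (V i * (V j)ᴴ)) * R = 0 for all i, j, k, l. (Theorem 2 in the algebraic form proved in the paper: the separability criteria and the zero-discord criteria are equivalent.) -/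
open Matrix ComplexOrder

/-- **Theorem 2.** The zero-discord condition is equivalent to the conjunction
of the qubit-like condition (all conjugates `V i * ρE * (V i)ᴴ` coincide, with
common value `R`) and the corrected qutrit-like condition
`R * [V i (V j)ᴴ, V k (V l)ᴴ] * R = 0`. -/
theorem zero_discord_iff_qubitLike_and_corrected_qutritLike
    (dS dE : ℕ) (hdS : 0 < dS) (hdE : 0 < dE)
    (ρE : Matrix (Fin dE) (Fin dE) ℂ)
    (hρE : ρE.PosSemidef) (htr : ρE.trace = 1)
    (V : Fin dS → Matrix (Fin dE) (Fin dE) ℂ)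
    (hV : ∀ i, V i ∈ Matrix.unitaryGroup (Fin dE) ℂ) :
    (∀ i j k l : Fin dS,
        Commute (V i * ρE * (V j)ᴴ) (V k * ρE * (V l)ᴴ)) ↔
    (∃ R : Matrix (Fin dE) (Fin dE) ℂ,
      (∀ i : Fin dS, V i * ρE * (V i)ᴴ = R) ∧
      (∀ i j k l : Fin dS,
        R * ((V i * (V j)ᴴ) * (V k * (V l)ᴴ) - (V k * (V l)ᴴ) * (V i * (V j)ᴴ)) * R
          = 0)) := by
  -- basic unitary cancellation lemmas
  have hVc : ∀ i : Fin dS, (V i)ᴴ * V i = 1 := fun i => by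
    simpa [Matrix.star_eq_conjTranspose] using (Matrix.mem_unitaryGroup_iff'.mp (hV i))
  have hVc' : ∀ i : Fin dS, V i * (V i)ᴴ = 1 := fun i => by
    simpa [Matrix.star_eq_conjTranspose] using (Matrix.mem_unitaryGroup_iff.mp (hV i))
  have hcan : ∀ (i : Fin dS) (X : Matrix (Fin dE) (Fin dE) ℂ),
      (V i)ᴴ * (V i * X) = X := fun i X => by
    rw [← Matrix.mul_assoc, hVc, Matrix.one_mul]
  have hcan' : ∀ (i : Fin dS) (X : Matrix (Fin dE) (Fin dE) ℂ),
      V i * ((V i)ᴴ * X) = X := fun i X => by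
    rw [← Matrix.mul_assoc, hVc', Matrix.one_mul]
  -- the key algebraic identity
  have key : ∀ i j k l : Fin dS,
      (V i * ρE * (V i)ᴴ) * ((V i * (V j)ᴴ) * (V k * (V l)ᴴ)) * (V l * ρE * (V l)ᴴ)
        = (V i * ρE * (V j)ᴴ) * (V k * ρE * (V l)ᴴ) := fun i j k l => by
    simp only [Matrix.mul_assoc, hcan, hcan']
  have hPSD : ∀ i : Fin dS, (V i * ρE * (V i)ᴴ).PosSemidef := fun i =>
    hρE.mul_mul_conjTranspose_same (V i)
  constructor
  · intro h
    -- all squares agree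
    have hsq : ∀ i j : Fin dS,
        (V i * ρE * (V i)ᴴ) ^ 2 = (V j * ρE * (V j)ᴴ) ^ 2 := by
      intro i j
      have h1 : (V i * ρE * (V j)ᴴ) * (V j * ρE * (V i)ᴴ)
          = (V i * ρE * (V i)ᴴ) ^ 2 := by
        simp only [pow_two, Matrix.mul_assoc, hcan, hcan']
      have h2 : (V j * ρE * (V i)ᴴ) * (V i * ρE * (V j)ᴴ)
          = (V j * ρE * (V j)ᴴ) ^ 2 := by
        simp only [pow_two, Matrix.mul_assoc, hcan, hcan']
      rw [← h1, ← h2]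
      exact h i j j i
    have hR : ∀ i j : Fin dS, V i * ρE * (V i)ᴴ = V j * ρE * (V j)ᴴ := fun i j =>
      by open scoped MatrixOrder in
        exact (CFC.sq_eq_sq_iff _ _ (hPSD i).nonneg (hPSD j).nonneg).mp (hsq i j)
    set i0 : Fin dS := ⟨0, hdS⟩
    refine ⟨V i0 * ρE * (V i0)ᴴ, fun i => hR i i0, ?_⟩
    intro i j k l
    have e1 : (V i0 * ρE * (V i0)ᴴ) * ((V i * (V j)ᴴ) * (V k * (V l)ᴴ)) * (V i0 * ρE * (V i0)ᴴ)
        = (V i * ρE * (V j)ᴴ) * (V k * ρE * (V l)ᴴ) := by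
      have e := key i j k l; rw [hR i i0, hR l i0] at e; exact e
    have e2 : (V i0 * ρE * (V i0)ᴴ) * ((V k * (V l)ᴴ) * (V i * (V j)ᴴ)) * (V i0 * ρE * (V i0)ᴴ)
        = (V k * ρE * (V l)ᴴ) * (V i * ρE * (V j)ᴴ) := by
      have e := key k l i j; rw [hR k i0, hR j i0] at e; exact e
    have := h i j k l
    rw [Matrix.mul_sub, Matrix.sub_mul, e1, e2, this.eq, sub_self]
  · rintro ⟨R, hR, hQ⟩
    intro i j k l
    have e1 : (V i * ρE * (V j)ᴴ) * (V k * ρE * (V l)ᴴ)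
        = R * ((V i * (V j)ᴴ) * (V k * (V l)ᴴ)) * R := by
      rw [← key i j k l, hR i, hR l]
    have e2 : (V k * ρE * (V l)ᴴ) * (V i * ρE * (V j)ᴴ)
        = R * ((V k * (V l)ᴴ) * (V i * (V j)ᴴ)) * R := by
      rw [← key k l i j, hR k, hR j]
    have hq := hQ i j k l
    rw [Matrix.mul_sub, Matrix.sub_mul, sub_eq_zero] at hq
    show _ = _
    rw [e1, e2, hq]
end

section
/- Let d_S, d_E be positive integers, let ρ_E be a d_E×d_E complex positive semidefinite matrix with trace 1, and let V i (for i : Fin d_S) be unitary d_E×d_E complex matrices. If the zero-discord condition holds (V i * ρ_E * (V j)ᴴ commutes with V k * ρ_E * (V l)ᴴ for all i, j, k, l), then V i * ρ_E² * (V i)ᴴ = V j * ρ_E² * (V j)ᴴ for all i, j; equivalently, the unitary W i j = (V j)ᴴ * V i satisfies (W i j) * ρ_E² * (W i j)ᴴ = ρ_E² for all i, j. -/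
open Matrix ComplexOrder

/-- Under the zero-discord condition, `V i * ρE² * (V i)ᴴ` is independent of `i`;
equivalently the unitaries `W i j = (V j)ᴴ * V i` leave `ρE²` invariant. -/
theorem zero_discord_implies_rhoSq_invariant
    (dS dE : ℕ) (hdS : 0 < dS) (hdE : 0 < dE)
    (ρE : Matrix (Fin dE) (Fin dE) ℂ)
    (hρE : ρE.PosSemidef) (htr : ρE.trace = 1)
    (V : Fin dS → Matrix (Fin dE) (Fin dE) ℂ)
    (hV : ∀ i, V i ∈ Matrix.unitaryGroup (Fin dE) ℂ)
    (hzd : ∀ i j k l : Fin dS,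
      Commute (V i * ρE * (V j)ᴴ) (V k * ρE * (V l)ᴴ)) :
    (∀ i j : Fin dS, V i * ρE ^ 2 * (V i)ᴴ = V j * ρE ^ 2 * (V j)ᴴ) ∧
    (∀ i j : Fin dS,
      ((V j)ᴴ * V i) * ρE ^ 2 * ((V j)ᴴ * V i)ᴴ = ρE ^ 2) := by
  have hstar : ∀ i, (V i)ᴴ * V i = 1 := fun i => by
    simpa [Matrix.star_eq_conjTranspose] using (hV i).1
  have hcancel : ∀ (i : Fin dS) (X : Matrix (Fin dE) (Fin dE) ℂ),
      (V i)ᴴ * (V i * X) = X := fun i X => by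
    rw [← mul_assoc, hstar i, one_mul]
  have h1 : ∀ i j : Fin dS, V i * ρE ^ 2 * (V i)ᴴ = V j * ρE ^ 2 * (V j)ᴴ := by
    intro i j
    have hc := (hzd i j j i).eq
    have e1 : (V i * ρE * (V j)ᴴ) * (V j * ρE * (V i)ᴴ) = V i * ρE ^ 2 * (V i)ᴴ := by
      simp [pow_two, mul_assoc, hcancel]
    have e2 : (V j * ρE * (V i)ᴴ) * (V i * ρE * (V j)ᴴ) = V j * ρE ^ 2 * (V j)ᴴ := by
      simp [pow_two, mul_assoc, hcancel]
    rw [← e1, ← e2, hc]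
  refine ⟨h1, fun i j => ?_⟩
  have h := h1 i j
  calc ((V j)ᴴ * V i) * ρE ^ 2 * ((V j)ᴴ * V i)ᴴ
      = (V j)ᴴ * (V i * ρE ^ 2 * (V i)ᴴ) * V j := by
        simp [Matrix.conjTranspose_mul, mul_assoc]
    _ = (V j)ᴴ * (V j * ρE ^ 2 * (V j)ᴴ) * V j := by rw [h]
    _ = ρE ^ 2 := by
        simp [mul_assoc, hcancel]
        rw [hstar j, mul_one]
end

section
/- Let d_S, d_E be positive integers, let ρ_E be a d_E×d_E complex positive semidefinite matrix with trace 1, and let V i (for i : Fin d_S) be unitary d_E×d_E complex matrices. If the zero-discord condition holds (V i * ρ_E * (V j)ᴴ commutes with V k * ρ_E * (V l)ᴴ for all i, j, k, l), then the qubit-like condition holds: V i * ρ_E * (V i)ᴴ = V j * ρ_E * (V j)ᴴ for all i, j. (First step of Appendix C: the implication V i ρ_E² V iᴴ = V j ρ_E² V jᴴ ⇒ V i ρ_E V iᴴ = V j ρ_E V jᴴ, via uniqueness of the positive semidefinite square root.) -/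
open Matrix ComplexOrder

/-- **First step of Appendix C.** The zero-discord condition implies the
qubit-like condition: `V i * ρE * (V i)ᴴ = V j * ρE * (V j)ᴴ` for all `i, j`. -/
theorem zero_discord_implies_qubitLike
    (dS dE : ℕ) (hdS : 0 < dS) (hdE : 0 < dE)
    (ρE : Matrix (Fin dE) (Fin dE) ℂ)
    (hρE : ρE.PosSemidef) (htr : ρE.trace = 1)
    (V : Fin dS → Matrix (Fin dE) (Fin dE) ℂ)
    (hV : ∀ i, V i ∈ Matrix.unitaryGroup (Fin dE) ℂ)
    (hzd : ∀ i j k l : Fin dS,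
      Commute (V i * ρE * (V j)ᴴ) (V k * ρE * (V l)ᴴ)) :
    ∀ i j : Fin dS, V i * ρE * (V i)ᴴ = V j * ρE * (V j)ᴴ := by
  have h1 : ∀ i, (V i)ᴴ * V i = 1 := by
    intro i
    simpa [star_eq_conjTranspose] using (Matrix.mem_unitaryGroup_iff'.mp (hV i))
  intro i j
  have hAi : (V i * ρE * (V i)ᴴ).PosSemidef := hρE.mul_mul_conjTranspose_same (V i)
  have hAj : (V j * ρE * (V j)ᴴ).PosSemidef := hρE.mul_mul_conjTranspose_same (V j)
  apply (show (V i * ρE * (V i)ᴴ) ^ 2 = (V j * ρE * (V j)ᴴ) ^ 2 →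
      V i * ρE * (V i)ᴴ = V j * ρE * (V j)ᴴ by
    open scoped MatrixOrder in
    intro h
    rw [← CFC.sqrt_sq _ hAi.nonneg, h, CFC.sqrt_sq _ hAj.nonneg])
  have hc := hzd i j j i
  unfold Commute SemiconjBy at hc
  calc (V i * ρE * (V i)ᴴ) ^ 2
      = (V i * ρE * (V j)ᴴ) * (V j * ρE * (V i)ᴴ) := by
        simp only [pow_two, Matrix.mul_assoc]
        rw [← Matrix.mul_assoc ((V i)ᴴ) (V i), h1 i,
            ← Matrix.mul_assoc ((V j)ᴴ) (V j), h1 j]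

    _ = (V j * ρE * (V i)ᴴ) * (V i * ρE * (V j)ᴴ) := hc
    _ = (V j * ρE * (V j)ᴴ) ^ 2 := by
        simp only [pow_two, Matrix.mul_assoc]
        rw [← Matrix.mul_assoc ((V i)ᴴ) (V i), h1 i,
            ← Matrix.mul_assoc ((V j)ᴴ) (V j), h1 j]
end

section
/- Let d_S, d_E be positive integers, let ρ_E be a d_E×d_E complex positive semidefinite matrix, and let V i (for i : Fin d_S) be unitary d_E×d_E complex matrices satisfying the qubit-like condition: V i * ρ_E * (V i)ᴴ = R for all i. Then for all i, j, k, l the commutator identity [V i * ρ_E * (V j)ᴴ, V k * ρ_E * (V l)ᴴ] = R * [V i * (V j)ᴴ, V k * (V l)ᴴ] * R holds, where [A,B] = A*B − B*A. In particular, if additionally the corrected qutrit-like condition R * [V i (V j)ᴴ, V k (V l)ᴴ] * R = 0 holds for all i, j, k, l, then the zero-discord condition holds: V i * ρ_E * (V j)ᴴ commutes with V k * ρ_E * (V l)ᴴ for all i, j, k, l. -/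
open Matrix ComplexOrder

/-- Under the qubit-like condition, the commutator identity
`[V i ρE (V j)ᴴ, V k ρE (V l)ᴴ] = R * [V i (V j)ᴴ, V k (V l)ᴴ] * R` holds; in
particular the corrected qutrit-like condition implies the zero-discord
condition. -/
theorem commutator_identity_and_qutritLike_implies_zero_discord
    (dS dE : ℕ) (hdS : 0 < dS) (hdE : 0 < dE)
    (ρE : Matrix (Fin dE) (Fin dE) ℂ)
    (hρE : ρE.PosSemidef)
    (V : Fin dS → Matrix (Fin dE) (Fin dE) ℂ)
    (hV : ∀ i, V i ∈ Matrix.unitaryGroup (Fin dE) ℂ)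
    (R : Matrix (Fin dE) (Fin dE) ℂ)
    (hqb : ∀ i : Fin dS, V i * ρE * (V i)ᴴ = R) :
    (∀ i j k l : Fin dS,
      (V i * ρE * (V j)ᴴ) * (V k * ρE * (V l)ᴴ)
        - (V k * ρE * (V l)ᴴ) * (V i * ρE * (V j)ᴴ)
        = R * ((V i * (V j)ᴴ) * (V k * (V l)ᴴ)
                - (V k * (V l)ᴴ) * (V i * (V j)ᴴ)) * R) ∧
    ((∀ i j k l : Fin dS,
        R * ((V i * (V j)ᴴ) * (V k * (V l)ᴴ)
              - (V k * (V l)ᴴ) * (V i * (V j)ᴴ)) * R = 0) →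
      ∀ i j k l : Fin dS,
        Commute (V i * ρE * (V j)ᴴ) (V k * ρE * (V l)ᴴ)) := by
  have hVs : ∀ i, (V i)ᴴ * V i = 1 := fun i => (hV i).1
  have hleft : ∀ i j, R * (V i * (V j)ᴴ) = V i * ρE * (V j)ᴴ := by
    intro i j
    calc R * (V i * (V j)ᴴ) = (V i * ρE * (V i)ᴴ) * (V i * (V j)ᴴ) := by rw [hqb i]
    _ = V i * ρE * ((V i)ᴴ * V i) * (V j)ᴴ := by simp only [Matrix.mul_assoc]
    _ = V i * ρE * (V j)ᴴ := by rw [hVs i, mul_one]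
  have hright : ∀ i j, (V i * (V j)ᴴ) * R = V i * ρE * (V j)ᴴ := by
    intro i j
    calc (V i * (V j)ᴴ) * R = (V i * (V j)ᴴ) * (V j * ρE * (V j)ᴴ) := by rw [hqb j]
    _ = V i * ((V j)ᴴ * V j) * ρE * (V j)ᴴ := by simp only [Matrix.mul_assoc]
    _ = V i * ρE * (V j)ᴴ := by rw [hVs j, mul_one]
  have hcomm : ∀ i j k l : Fin dS,
      (V i * ρE * (V j)ᴴ) * (V k * ρE * (V l)ᴴ)
        - (V k * ρE * (V l)ᴴ) * (V i * ρE * (V j)ᴴ)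
        = R * ((V i * (V j)ᴴ) * (V k * (V l)ᴴ)
                - (V k * (V l)ᴴ) * (V i * (V j)ᴴ)) * R := by
    intro i j k l
    have p1 : (V i * ρE * (V j)ᴴ) * (V k * ρE * (V l)ᴴ)
        = R * ((V i * (V j)ᴴ) * (V k * (V l)ᴴ)) * R := by
      rw [← hleft i j, ← hright k l]; simp only [Matrix.mul_assoc]
    have p2 : (V k * ρE * (V l)ᴴ) * (V i * ρE * (V j)ᴴ)
        = R * ((V k * (V l)ᴴ) * (V i * (V j)ᴴ)) * R := by
      rw [← hleft k l, ← hright i j]; simp only [Matrix.mul_assoc]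
    rw [p1, p2, mul_sub, sub_mul]
  refine ⟨hcomm, fun hq i j k l => ?_⟩
  have := hcomm i j k l
  rw [hq i j k l] at this
  exact sub_eq_zero.mp this
end

section
/- Let d_S, d_E be positive integers, let ρ_E be a d_E×d_E complex positive semidefinite matrix with trace 1, and let V i (for i : Fin d_S) be unitary d_E×d_E complex matrices. If the zero-discord condition holds (V i * ρ_E * (V j)ᴴ commutes with V k * ρ_E * (V l)ᴴ for all i, j, k, l), then, writing R = V 0 * ρ_E * (V 0)ᴴ, the corrected qutrit-like condition holds: R * ((V i * (V j)ᴴ) * (V k * (V l)ᴴ) − (V k * (V l)ᴴ) * (V i * (V j)ᴴ)) * R = 0 for all i, j, k, l. (Appendix C, forward direction of Theorem 2.) -/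
open Matrix ComplexOrder

/-- **Appendix C, forward direction of Theorem 2.** The zero-discord condition
implies the corrected qutrit-like condition, with `R = V 0 * ρE * (V 0)ᴴ`. -/
theorem zero_discord_implies_corrected_qutritLike
    (dS dE : ℕ) (hdS : 0 < dS) (hdE : 0 < dE)
    (ρE : Matrix (Fin dE) (Fin dE) ℂ)
    (hρE : ρE.PosSemidef) (htr : ρE.trace = 1)
    (V : Fin dS → Matrix (Fin dE) (Fin dE) ℂ)
    (hV : ∀ i, V i ∈ Matrix.unitaryGroup (Fin dE) ℂ)
    (hzd : ∀ i j k l : Fin dS,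
      Commute (V i * ρE * (V j)ᴴ) (V k * ρE * (V l)ᴴ)) :
    ∀ i j k l : Fin dS,
      (V (⟨0, hdS⟩ : Fin dS) * ρE * (V (⟨0, hdS⟩ : Fin dS))ᴴ) *
          ((V i * (V j)ᴴ) * (V k * (V l)ᴴ) - (V k * (V l)ᴴ) * (V i * (V j)ᴴ)) *
          (V (⟨0, hdS⟩ : Fin dS) * ρE * (V (⟨0, hdS⟩ : Fin dS))ᴴ) = 0 := by
  intro i j k l
  set z : Fin dS := ⟨0, hdS⟩ with hz
  -- cancellation lemmas from unitarity
  have hc1 : ∀ (a : Fin dS) (M : Matrix (Fin dE) (Fin dE) ℂ),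
      (V a)ᴴ * (V a * M) = M := by
    intro a M
    have h : (V a)ᴴ * V a = 1 := Matrix.mem_unitaryGroup_iff'.mp (hV a)
    rw [← Matrix.mul_assoc, h, Matrix.one_mul]
  -- squares of V a * ρE * (V a)ᴴ agree
  have hsq : ∀ a : Fin dS,
      (V a * ρE * (V a)ᴴ) ^ 2 = V a * (ρE * (ρE * (V a)ᴴ)) := by
    intro a
    rw [pow_two]
    simp only [Matrix.mul_assoc, hc1]
  have hsqeq : ∀ a : Fin dS,
      (V a * ρE * (V a)ᴴ) ^ 2 = (V z * ρE * (V z)ᴴ) ^ 2 := by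
    intro a
    have h := (hzd a z z a).eq
    simp only [Matrix.mul_assoc, hc1] at h
    rw [hsq, hsq]
    exact h
  have hpsd : ∀ a : Fin dS, (V a * ρE * (V a)ᴴ).PosSemidef := by
    intro a
    exact hρE.mul_mul_conjTranspose_same (V a)
  -- uniqueness of PSD square roots
  have hR : ∀ a : Fin dS, V a * ρE * (V a)ᴴ = V z * ρE * (V z)ᴴ := by
    intro a
    open scoped MatrixOrder in
    exact (CFC.sq_eq_sq_iff _ _ (Matrix.nonneg_iff_posSemidef.mpr (hpsd a))
      (Matrix.nonneg_iff_posSemidef.mpr (hpsd z))).mp (hsqeq a)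
  set R := V z * ρE * (V z)ᴴ with hRdef
  -- key multiplication rules
  have h1 : ∀ a b : Fin dS, R * (V a * (V b)ᴴ) = V a * ρE * (V b)ᴴ := by
    intro a b
    rw [← hR a]
    simp only [Matrix.mul_assoc, hc1]
  have h2 : ∀ a b : Fin dS, (V a * (V b)ᴴ) * R = V a * ρE * (V b)ᴴ := by
    intro a b
    rw [← hR b]
    simp only [Matrix.mul_assoc, hc1]
  have key : (R * ((V i * (V j)ᴴ) * (V k * (V l)ᴴ))) * R
      = (R * ((V k * (V l)ᴴ) * (V i * (V j)ᴴ))) * R := by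
    calc (R * ((V i * (V j)ᴴ) * (V k * (V l)ᴴ))) * R
        = (R * (V i * (V j)ᴴ)) * ((V k * (V l)ᴴ) * R) := by
          simp only [Matrix.mul_assoc]
      _ = (V i * ρE * (V j)ᴴ) * (V k * ρE * (V l)ᴴ) := by rw [h1, h2]
      _ = (V k * ρE * (V l)ᴴ) * (V i * ρE * (V j)ᴴ) := (hzd i j k l).eq
      _ = (R * (V k * (V l)ᴴ)) * ((V i * (V j)ᴴ) * R) := by rw [h1, h2]
      _ = (R * ((V k * (V l)ᴴ) * (V i * (V j)ᴴ))) * R := by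
          simp only [Matrix.mul_assoc]
  rw [Matrix.mul_sub, Matrix.sub_mul, key, sub_self]
end

section
/- Let d_S, d_E be positive integers, let ρ_E be a d_E×d_E complex positive semidefinite matrix with trace 1, let V i (for i : Fin d_S) be unitary d_E×d_E complex matrices, and let U_SE = ∑ i, (Matrix.stdBasisMatrix i i 1) ⊗ₖ (V i). If ρ_S is a d_S×d_S diagonal positive semidefinite matrix with trace 1 (i.e. the system has vanishing initial coherence, ρ_S i j = 0 for i ≠ j), then the evolved joint state satisfies U_SE * (ρ_S ⊗ₖ ρ_E) * U_SEᴴ = ∑ i, (ρ_S i i) • ((Matrix.stdBasisMatrix i i 1) ⊗ₖ (V i * ρ_E * (V i)ᴴ)); in particular the evolved joint state is separable (a finite sum of Kronecker products of positive semidefinite matrices). -/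
open Matrix ComplexOrder Kronecker

/-- A positive semidefinite matrix indexed by `Fin dS × Fin dE` is separable
if it is a finite sum of Kronecker products of positive semidefinite
matrices. -/
def SeparableState (dS dE : ℕ)
    (ρ : Matrix (Fin dS × Fin dE) (Fin dS × Fin dE) ℂ) : Prop :=
  ∃ (n : ℕ) (σ : Fin n → Matrix (Fin dS) (Fin dS) ℂ)
    (τ : Fin n → Matrix (Fin dE) (Fin dE) ℂ),
    (∀ k, (σ k).PosSemidef) ∧ (∀ k, (τ k).PosSemidef) ∧
    ρ = ∑ k, (σ k) ⊗ₖ (τ k)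

lemma std_mul_mul_std {d : ℕ} (A : Matrix (Fin d) (Fin d) ℂ) (i j : Fin d) :
    Matrix.single i i (1 : ℂ) * A * Matrix.single j j (1 : ℂ)
      = A i j • Matrix.single i j 1 := by
  ext a b
  simp [Matrix.mul_apply, Matrix.single, Finset.sum_ite_eq,
    Finset.sum_ite_eq', ite_and, smul_ite]
  aesop

lemma kron_conjT {dS dE : ℕ} (A : Matrix (Fin dS) (Fin dS) ℂ)
    (B : Matrix (Fin dE) (Fin dE) ℂ) : (A ⊗ₖ B)ᴴ = Aᴴ ⊗ₖ Bᴴ := by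
  ext ⟨a, b⟩ ⟨c, d⟩
  simp [Matrix.conjTranspose_apply, star_mul', mul_comm]

lemma psd_smul {d : ℕ} {c : ℂ} (hc : 0 ≤ c) {A : Matrix (Fin d) (Fin d) ℂ}
    (hA : A.PosSemidef) : (c • A).PosSemidef := by
  have him : c.im = 0 := ((Complex.le_def.mp hc).2).symm
  have hcs : star c = c := by
    rw [Complex.star_def, Complex.conj_eq_iff_im]; exact him
  constructor
  · rw [Matrix.IsHermitian, Matrix.conjTranspose_smul, hcs, hA.1]
  · intro x
    exact (hA.smul hc).2 x

lemma std_psd {d : ℕ} (i : Fin d) :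
    (Matrix.single i i (1 : ℂ)).PosSemidef := by
  have h : Matrix.single i i (1 : ℂ)
      = (Matrix.single i i (1 : ℂ))ᴴ * Matrix.single i i (1 : ℂ) := by
    ext a b
    simp [Matrix.mul_apply, Matrix.single, Matrix.conjTranspose_apply, ite_and]
    aesop
  rw [h]
  exact Matrix.posSemidef_conjTranspose_mul_self _

/-- If the system has vanishing initial coherence (`ρS` diagonal), the evolved
joint state is `∑ i, ρS i i • (|i⟩⟨i| ⊗ₖ V i ρE (V i)ᴴ)`, and in particular
separable. -/
theorem zero_coherence_implies_separable_evolved_state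
    (dS dE : ℕ) (hdS : 0 < dS) (hdE : 0 < dE)
    (ρE : Matrix (Fin dE) (Fin dE) ℂ)
    (hρE : ρE.PosSemidef) (htrE : ρE.trace = 1)
    (V : Fin dS → Matrix (Fin dE) (Fin dE) ℂ)
    (hV : ∀ i, V i ∈ Matrix.unitaryGroup (Fin dE) ℂ)
    (USE : Matrix (Fin dS × Fin dE) (Fin dS × Fin dE) ℂ)
    (hUSE : USE = ∑ i : Fin dS, (Matrix.single i i (1 : ℂ)) ⊗ₖ (V i))
    (ρS : Matrix (Fin dS) (Fin dS) ℂ)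
    (hρS : ρS.PosSemidef) (htrS : ρS.trace = 1)
    (hdiag : ∀ i j : Fin dS, i ≠ j → ρS i j = 0) :
    (USE * (ρS ⊗ₖ ρE) * USEᴴ =
      ∑ i : Fin dS,
        (ρS i i) • ((Matrix.single i i (1 : ℂ)) ⊗ₖ (V i * ρE * (V i)ᴴ))) ∧
    SeparableState dS dE (USE * (ρS ⊗ₖ ρE) * USEᴴ) := by
  have key : USE * (ρS ⊗ₖ ρE) * USEᴴ =
      ∑ i : Fin dS,
        (ρS i i) • ((Matrix.single i i (1 : ℂ)) ⊗ₖ (V i * ρE * (V i)ᴴ)) := by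
    subst hUSE
    rw [Matrix.conjTranspose_sum]
    rw [Finset.sum_mul, Finset.mul_sum]
    simp_rw [Finset.sum_mul, kron_conjT]
    have hsym : ∀ i : Fin dS,
        (Matrix.single i i (1 : ℂ))ᴴ = Matrix.single i i (1 : ℂ) := by
      intro i; ext a b
      simp [Matrix.conjTranspose_apply, Matrix.single]
      aesop
    simp_rw [hsym, ← Matrix.mul_kronecker_mul, std_mul_mul_std, Matrix.smul_kronecker]
    refine Finset.sum_congr rfl fun i _ => ?_
    rw [Finset.sum_eq_single i]
    · intro b _ hbi
      rw [hdiag b i hbi, zero_smul]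
    · intro h; exact absurd (Finset.mem_univ i) h
  refine ⟨key, dS, fun i => ρS i i • Matrix.single i i (1 : ℂ),
    fun i => V i * ρE * (V i)ᴴ, ?_, ?_, ?_⟩
  · intro k
    have hk : (0 : ℂ) ≤ ρS k k := by
      have := hρS.dotProduct_mulVec_nonneg (fun j => if j = k then 1 else 0)
      simpa [dotProduct, Matrix.mulVec, ite_and] using this
    exact psd_smul hk (std_psd k)
  · intro k
    exact hρE.mul_mul_conjTranspose_same (V k)
  · rw [key]
    exact Finset.sum_congr rfl fun i _ => by rw [Matrix.smul_kronecker]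
end

section
/- Let d_S, d_E be positive integers, let ρ_E be a d_E×d_E complex positive semidefinite matrix with trace 1, let V i (for i : Fin d_S) be unitary d_E×d_E complex matrices, and let U_SE = ∑ i, (Matrix.stdBasisMatrix i i 1) ⊗ₖ (V i). Suppose the dephasing factors φ i j = Trace(V i * ρ_E * (V j)ᴴ) are NOT of mixed-unitary form, i.e. there do not exist N ≥ 1, nonnegative weights p : Fin N → ℝ summing to 1, and phases θ : Fin d_S → Fin N → ℝ with φ i j = ∑ n, (p n) * Complex.exp (Complex.I * (θ i n − θ j n)) for all i, j. Then there exists a unit vector ψ : Fin d_S → ℂ such that the evolved joint state U_SE * ((Matrix.vecMulVec ψ (star ψ)) ⊗ₖ ρ_E) * U_SEᴴ is not separable. (Main result: non-mixed-unitarity of the reduced pure dephasing dynamics witnesses system–environment entanglement.) -/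
open Matrix ComplexOrder Kronecker

lemma PD_use_entry (dS dE : ℕ) (V : Fin dS → Matrix (Fin dE) (Fin dE) ℂ)
    (l m : Fin dS) (c d : Fin dE) :
    (∑ i : Fin dS, (Matrix.single i i (1 : ℂ)) ⊗ₖ (V i)) (l,c) (m,d)
      = if l = m then V l c d else 0 := by
  simp only [Matrix.sum_apply, Matrix.kroneckerMap_apply, Matrix.single, Matrix.of_apply]
  rw [Finset.sum_eq_single l] <;> aesop

lemma PD_sum_entry_eq (dE : ℕ) (B X C : Matrix (Fin dE) (Fin dE) ℂ) (a b : Fin dE) :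
    ∑ c, ∑ d, (starRingEnd ℂ) (B c a) * X c d * C d b = (Bᴴ * X * C) a b := by
  simp only [Matrix.mul_apply, Matrix.conjTranspose_apply, Finset.sum_mul, starRingEnd_apply]
  rw [Finset.sum_comm]

lemma PD_conj_entry (dS dE : ℕ) (V : Fin dS → Matrix (Fin dE) (Fin dE) ℂ)
    (W A : Matrix (Fin dS × Fin dE) (Fin dS × Fin dE) ℂ)
    (hW : ∀ l m c d, W (l,c) (m,d) = if l = m then V l c d else 0)
    (i j : Fin dS) (a b : Fin dE) :
    (Wᴴ * A * W) (i,a) (j,b) = ∑ c, ∑ d, (starRingEnd ℂ) (V i c a) * A (i,c) (j,d) * V j d b := by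
  simp only [Matrix.mul_apply, Matrix.conjTranspose_apply, Fintype.sum_prod_type]
  simp only [hW, apply_ite (starRingEnd ℂ), apply_ite (star : ℂ → ℂ), map_zero, star_zero,
    ite_mul, zero_mul, mul_ite, mul_zero,
    Finset.sum_ite_eq, Finset.sum_ite_eq', Finset.mem_univ, if_true, Finset.sum_mul, Finset.mul_sum]
  rw [Finset.sum_comm]
  simp only [Finset.sum_ite_eq', Finset.mem_univ, if_true, starRingEnd_apply]
  rw [Finset.sum_comm, Finset.sum_eq_single i]
  · simp
    rw [Finset.sum_comm]
  · intro y _ hy; simp [hy]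
  · intro h; simp at h

lemma PD_conj_entry_kron (dS dE : ℕ) (V : Fin dS → Matrix (Fin dE) (Fin dE) ℂ)
    (W : Matrix (Fin dS × Fin dE) (Fin dS × Fin dE) ℂ)
    (hW : ∀ l m c d, W (l,c) (m,d) = if l = m then V l c d else 0)
    (σ : Matrix (Fin dS) (Fin dS) ℂ) (τ : Matrix (Fin dE) (Fin dE) ℂ)
    (i j : Fin dS) (a b : Fin dE) :
    (Wᴴ * (σ ⊗ₖ τ) * W) (i,a) (j,b) = σ i j * ((V i)ᴴ * τ * (V j)) a b := by
  rw [PD_conj_entry dS dE V W _ hW]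
  rw [← PD_sum_entry_eq dE (V i) τ (V j) a b, Finset.mul_sum]
  refine Finset.sum_congr rfl fun c _ => ?_
  rw [Finset.mul_sum]
  refine Finset.sum_congr rfl fun d _ => ?_
  simp [Matrix.kroneckerMap_apply]
  ring

lemma PD_kron_ct {m n : Type*} [Fintype m] [Fintype n] (A : Matrix m m ℂ) (B : Matrix n n ℂ) :
    (A ⊗ₖ B)ᴴ = Aᴴ ⊗ₖ Bᴴ := by
  ext ⟨i,a⟩ ⟨j,b⟩
  simp [Matrix.conjTranspose_apply, Matrix.kroneckerMap_apply, star_mul']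

lemma PD_kron_psd {dS dE : ℕ} {σ : Matrix (Fin dS) (Fin dS) ℂ} {τ : Matrix (Fin dE) (Fin dE) ℂ}
    (hσ : σ.PosSemidef) (hτ : τ.PosSemidef) : (σ ⊗ₖ τ).PosSemidef := by
  exact hσ.kronecker hτ

lemma PD_smul_cancel {dE : ℕ} {A : Matrix (Fin dE) (Fin dE) ℂ} {z w : ℂ}
    (h : z • A = w • A) (hA : A ≠ 0) : z = w := by
  by_contra hzw
  apply hA
  have h0 : (z - w) • A = 0 := by rw [sub_smul, h, sub_self]
  rcases smul_eq_zero.mp h0 with h' | h'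
  · exact absurd (sub_eq_zero.mp h') hzw
  · exact h'

lemma PD_diag_nonneg {dE : ℕ} {M : Matrix (Fin dE) (Fin dE) ℂ} (hM : M.PosSemidef)
    (a : Fin dE) : 0 ≤ M a a := by
  have := hM.dotProduct_mulVec_nonneg (Pi.single a 1)
  simpa [dotProduct, Matrix.mulVec, Pi.single_apply, Finset.sum_ite_eq,
    Finset.sum_ite_eq'] using this

lemma PD_nonneg_eq_abs {z : ℂ} (h : 0 ≤ z) : z = (‖z‖ : ℝ) := by
  obtain ⟨hre, him⟩ := Complex.nonneg_iff.mp h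
  have hz : z = (z.re : ℂ) := Complex.ext rfl (by simp [← him])
  rw [hz, Complex.norm_real, Real.norm_eq_abs, abs_of_nonneg hre]

lemma PD_sum_mulVec {P : Type*} [Fintype P] {n : ℕ} (f : Fin n → Matrix P P ℂ) (x : P → ℂ) :
    (∑ k, f k) *ᵥ x = ∑ k, f k *ᵥ x := by
  ext p
  simp only [Matrix.mulVec, dotProduct, Finset.sum_apply, Matrix.sum_apply,
    Finset.sum_mul]
  rw [Finset.sum_comm]

lemma PD_dot_sum {P : Type*} [Fintype P] {n : ℕ} (v : Fin n → P → ℂ) (x : P → ℂ) :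
    x ⬝ᵥ (∑ k, v k) = ∑ k, x ⬝ᵥ v k := by
  simp only [dotProduct, Finset.sum_apply, Finset.mul_sum]
  rw [Finset.sum_comm]

/-- **Main result.** If the dephasing factors `Tr(V i ρE (V j)ᴴ)` are not of
mixed-unitary form, then there is an initial pure system state `|ψ⟩⟨ψ|` for
which the evolved system-environment joint state is entangled (not
separable). -/
theorem non_mixed_unitarity_witnesses_entanglement
    (dS dE : ℕ) (hdS : 0 < dS) (hdE : 0 < dE)
    (ρE : Matrix (Fin dE) (Fin dE) ℂ)
    (hρE : ρE.PosSemidef) (htrE : ρE.trace = 1)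
    (V : Fin dS → Matrix (Fin dE) (Fin dE) ℂ)
    (hV : ∀ i, V i ∈ Matrix.unitaryGroup (Fin dE) ℂ)
    (USE : Matrix (Fin dS × Fin dE) (Fin dS × Fin dE) ℂ)
    (hUSE : USE = ∑ i : Fin dS, (Matrix.single i i (1 : ℂ)) ⊗ₖ (V i))
    (hNMU : ¬ ∃ (N : ℕ) (_ : 1 ≤ N) (p : Fin N → ℝ) (θ : Fin dS → Fin N → ℝ),
      (∀ n, 0 ≤ p n) ∧ (∑ n, p n = 1) ∧
      ∀ i j : Fin dS, (V i * ρE * (V j)ᴴ).trace =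
        ∑ n, (p n : ℂ) * Complex.exp (Complex.I * ((θ i n : ℂ) - (θ j n : ℂ)))) :
    ∃ ψ : Fin dS → ℂ, (∑ i, ‖ψ i‖ ^ 2 = 1) ∧
      ¬ SeparableState dS dE
          (USE * ((Matrix.vecMulVec ψ (star ψ)) ⊗ₖ ρE) * USEᴴ) := by
  classical
  have hdSR : (0:ℝ) < dS := by exact_mod_cast hdS
  set c : ℝ := (Real.sqrt dS)⁻¹ with hcdef
  have hc0 : 0 ≤ c := inv_nonneg.mpr (Real.sqrt_nonneg _)
  have hc2 : c * c = (dS : ℝ)⁻¹ := by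
    rw [hcdef, ← mul_inv]
    rw [Real.mul_self_sqrt hdSR.le]
  refine ⟨fun _ => (c : ℂ), ?_, ?_⟩
  · simp only [Complex.norm_real, Real.norm_eq_abs, abs_of_nonneg hc0, Finset.sum_const, Finset.card_univ,
      Fintype.card_fin, nsmul_eq_mul]
    rw [sq, hc2]
    field_simp
  intro hsep
  obtain ⟨n, σ, τ, hσ, hτ, heq⟩ := hsep
  set ψ : Fin dS → ℂ := fun _ => (c : ℂ) with hψ
  set P : Matrix (Fin dS) (Fin dS) ℂ := Matrix.vecMulVec ψ (star ψ) with hP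
  have hPij : ∀ i j, P i j = (c:ℂ) * (c:ℂ) := by
    intro i j
    simp [hP, Matrix.vecMulVec_apply, hψ, Complex.conj_ofReal]
  have i0 : Fin dS := ⟨0, hdS⟩
  -- entry formula for USE
  have hW : ∀ l m cc d, USE (l,cc) (m,d) = if l = m then V l cc d else 0 := by
    intro l m cc d; rw [hUSE]; exact PD_use_entry dS dE V l m cc d
  have hW' : ∀ l m cc d, USEᴴ (l,cc) (m,d) = if l = m then (V l)ᴴ cc d else 0 := by
    intro l m cc d
    rw [Matrix.conjTranspose_apply, hW m l d cc]
    by_cases h : l = m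
    · subst h; simp [Matrix.conjTranspose_apply]
    · simp [h, Ne.symm h]
  have hVu : ∀ i, (V i)ᴴ * V i = 1 := by
    intro i
    rw [← Matrix.star_eq_conjTranspose]
    exact Matrix.mem_unitaryGroup_iff'.mp (hV i)
  have hVu' : ∀ i, V i * (V i)ᴴ = 1 := by
    intro i
    rw [← Matrix.star_eq_conjTranspose]
    exact Matrix.mem_unitaryGroup_iff.mp (hV i)
  -- entries of the evolved state
  have hρent : ∀ i j a b, (USE * (P ⊗ₖ ρE) * USEᴴ) (i,a) (j,b)
      = (c:ℂ) * (c:ℂ) * ((V i * ρE * (V j)ᴴ) a b) := by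
    intro i j a b
    have h := PD_conj_entry_kron dS dE (fun l => (V l)ᴴ) USEᴴ hW' P ρE i j a b
    rw [Matrix.conjTranspose_conjTranspose] at h
    rw [h, Matrix.conjTranspose_conjTranspose, hPij]
  -- the conjugated PSD pieces
  set M : Fin n → Matrix (Fin dS × Fin dE) (Fin dS × Fin dE) ℂ :=
    fun k => USEᴴ * (σ k ⊗ₖ τ k) * USE with hM
  have hMpsd : ∀ k, (M k).PosSemidef := fun k =>
    (PD_kron_psd (hσ k) (hτ k)).conjTranspose_mul_mul_same USE
  have hMent : ∀ k i j a b, M k (i,a) (j,b) = σ k i j * ((V i)ᴴ * τ k * V j) a b :=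
    fun k i j a b => PD_conj_entry_kron dS dE V USE hW (σ k) (τ k) i j a b
  -- unitarity of USE
  have hU1 : USEᴴ * USE = 1 := by
    ext ⟨i,a⟩ ⟨j,b⟩
    have h := PD_conj_entry_kron dS dE V USE hW 1 1 i j a b
    rw [Matrix.one_kronecker_one, Matrix.mul_one] at h
    rw [h]
    by_cases hij : i = j
    · subst hij
      simp [Matrix.one_apply, hVu i, Prod.ext_iff]
    · simp [Matrix.one_apply, hij, Prod.ext_iff]
  have hMsum : ∑ k, M k = P ⊗ₖ ρE := by
    have h1 : ∑ k, M k = USEᴴ * (USE * (P ⊗ₖ ρE) * USEᴴ) * USE := by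
      rw [heq, Matrix.mul_sum, Matrix.sum_mul]
    rw [h1, show USEᴴ * (USE * (P ⊗ₖ ρE) * USEᴴ) * USE
        = (USEᴴ * USE) * (P ⊗ₖ ρE) * (USEᴴ * USE) by simp only [Matrix.mul_assoc],
      hU1, Matrix.one_mul, Matrix.mul_one]
  -- the key block identities
  have hKEY : ∀ k (l i j : Fin dS) (a b : Fin dE),
      σ k l i * ((V l)ᴴ * τ k * V i) a b = σ k l j * ((V l)ᴴ * τ k * V j) a b := by
    intro k l i j a b
    by_cases hij : i = j
    · subst hij; rfl
    set x : Fin dS × Fin dE → ℂ := fun q =>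
      ((if q.1 = i then (1:ℂ) else 0) - (if q.1 = j then 1 else 0))
        * (if q.2 = b then 1 else 0) with hx
    have hPx : (P ⊗ₖ ρE) *ᵥ x = 0 := by
      ext ⟨l', c'⟩
      simp only [Matrix.mulVec, dotProduct, Fintype.sum_prod_type,
        Matrix.kroneckerMap_apply, hx, Pi.zero_apply]
      simp only [hPij, mul_ite, mul_zero, mul_one, ite_mul, zero_mul, sub_mul, mul_sub,
        Finset.sum_sub_distrib, Finset.sum_ite_eq', Finset.mem_univ, if_true]
      simp [hij]
    have hQ0 : ∀ k, star x ⬝ᵥ (M k *ᵥ x) = 0 := by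
      have hsum0 : ∑ k, star x ⬝ᵥ (M k *ᵥ x) = 0 := by
        rw [← PD_dot_sum, ← PD_sum_mulVec, hMsum, hPx, dotProduct_zero]
      intro k
      exact (Finset.sum_eq_zero_iff_of_nonneg (fun k _ => (hMpsd k).dotProduct_mulVec_nonneg x)).mp hsum0 k
        (Finset.mem_univ k)
    have hMx := ((hMpsd k).dotProduct_mulVec_zero_iff x).mp (hQ0 k)
    have h0 := congrFun hMx (l, a)
    simp only [Matrix.mulVec, dotProduct, Fintype.sum_prod_type, hx,
      Pi.zero_apply] at h0
    simp only [hMent k, mul_ite, mul_zero, mul_one, ite_mul, zero_mul, sub_mul, mul_sub,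
      Finset.sum_sub_distrib, Finset.sum_ite_eq', Finset.mem_univ, if_true] at h0
    exact sub_eq_zero.mp h0
  have hKEY2 : ∀ k (l i j : Fin dS),
      σ k l i • (τ k * V i) = σ k l j • (τ k * V j) := by
    intro k l i j
    have hKmat : σ k l i • ((V l)ᴴ * (τ k * V i)) = σ k l j • ((V l)ᴴ * (τ k * V j)) := by
      ext a b
      have := hKEY k l i j a b
      simp only [Matrix.smul_apply, smul_eq_mul, ← Matrix.mul_assoc]
      exact this
    have := congrArg (fun X => V l * X) hKmat
    simpa only [Matrix.mul_smul, ← Matrix.mul_assoc, hVu' l, Matrix.one_mul] using this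
  -- nonnegative traces
  have htrτ : ∀ k, (τ k).trace = (((τ k).trace.re : ℝ) : ℂ) ∧ 0 ≤ (τ k).trace.re := by
    intro k
    have h0 : 0 ≤ (τ k).trace := by
      have : (τ k).trace = ∑ a, τ k a a := by simp [Matrix.trace, Matrix.diag]
      rw [this]
      exact Finset.sum_nonneg fun a _ => PD_diag_nonneg (hτ k) a
    obtain ⟨hre, him⟩ := Complex.nonneg_iff.mp h0
    exact ⟨Complex.ext rfl (by simp [← him]), hre⟩
  set s : Fin n → ℝ := fun k => ‖σ k i0 i0‖ with hs
  set t : Fin n → ℝ := fun k => ((τ k).trace).re with ht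
  set θ : Fin dS → Fin n → ℝ := fun i k => Complex.arg (σ k i i0) with hθ
  set p : Fin n → ℝ := fun k => dS * (s k * t k) with hp
  -- main claim per k
  have hCLAIM : ∀ k (i j : Fin dS), σ k i j * (τ k).trace
      = ((s k : ℝ) : ℂ) * Complex.exp (Complex.I * ((θ i k : ℝ) - (θ j k : ℝ)))
        * (τ k).trace := by
    intro k i j
    by_cases hT : (τ k).trace = 0
    · rw [hT]; simp
    have hτ0 : τ k ≠ 0 := by intro h; apply hT; rw [h]; simp
    set R : ℝ := ∑ a, ∑ b, Complex.normSq (τ k a b) with hRdef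
    have hRtr : (τ k * (τ k)ᴴ).trace = (R : ℂ) := by
      rw [hRdef]
      push_cast
      simp only [Matrix.trace, Matrix.diag, Matrix.mul_apply, Matrix.conjTranspose_apply]
      refine Finset.sum_congr rfl fun a _ => Finset.sum_congr rfl fun b _ => ?_
      rw [← Complex.mul_conj]
      rfl
    have hRne : (R:ℂ) ≠ 0 := by
      have hne : ¬ ∀ a b, τ k a b = 0 := by
        intro h; exact hτ0 (by ext a b; simp [h])
      push_neg at hne
      obtain ⟨a, b, hab⟩ := hne
      have h1 : Complex.normSq (τ k a b) ≤ ∑ b', Complex.normSq (τ k a b') :=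
        Finset.single_le_sum (fun _ _ => Complex.normSq_nonneg _) (Finset.mem_univ b)
      have h2 : ∑ b', Complex.normSq (τ k a b') ≤ R :=
        Finset.single_le_sum
          (f := fun a' => ∑ b', Complex.normSq (τ k a' b'))
          (fun _ _ => Finset.sum_nonneg fun _ _ => Complex.normSq_nonneg _) (Finset.mem_univ a)
      have h3 : 0 < Complex.normSq (τ k a b) := Complex.normSq_pos.mpr hab
      exact Complex.ofReal_ne_zero.mpr (by linarith)
    have htrV : ∀ l, ((τ k * V l)ᴴ * (τ k * V l)).trace = (R:ℂ) := by
      intro l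
      rw [Matrix.conjTranspose_mul, Matrix.trace_mul_comm,
        show (τ k * V l) * ((V l)ᴴ * (τ k)ᴴ) = τ k * (τ k)ᴴ by
          rw [← Matrix.mul_assoc, Matrix.mul_assoc (τ k), hVu' l, Matrix.mul_one]]
      exact hRtr
    have hnsq : ∀ l i' j', Complex.normSq (σ k l i') = Complex.normSq (σ k l j') := by
      intro l i' j'
      have h := congrArg (fun X : Matrix (Fin dE) (Fin dE) ℂ => (Xᴴ * X).trace) (hKEY2 k l i' j')
      simp only [Matrix.conjTranspose_smul, Matrix.smul_mul, Matrix.mul_smul, Matrix.trace_smul,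
        smul_eq_mul, smul_smul] at h
      rw [htrV i', htrV j'] at h
      have e : ∀ z : ℂ, z * star z = (Complex.normSq z : ℂ) := by
        intro z; rw [← Complex.mul_conj z]; rfl
      rw [e, e] at h
      have h2 := mul_right_cancel₀ hRne h
      exact_mod_cast h2
    have habs : ∀ i' j', ‖σ k i' j'‖ = s k := by
      intro i' j'
      have e1 : ‖σ k i' j'‖ = ‖σ k i' i0‖ := by
        rw [Complex.norm_def, Complex.norm_def, hnsq i' j' i0]
      have e2 : ‖σ k i' i0‖ = ‖σ k i0 i'‖ := by
        rw [← (hσ k).1.apply i' i0]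
        exact Complex.norm_conj _
      have e3 : ‖σ k i0 i'‖ = ‖σ k i0 i0‖ := by
        rw [Complex.norm_def, Complex.norm_def, hnsq i0 i' i0]
      rw [e1, e2, e3, hs]
    by_cases hsz : s k = 0
    · have hz : σ k i j = 0 := by
        have := habs i j; rw [hsz] at this
        exact norm_eq_zero.mp this
      rw [hz, hsz]; simp
    have hsC : ((s k:ℝ):ℂ) ≠ 0 := by exact_mod_cast hsz
    have hτV0 : τ k * V i0 ≠ 0 := by
      intro h
      apply hτ0
      have h2 := congrArg (fun X => X * (V i0)ᴴ) h
      simpa [Matrix.mul_assoc, hVu' i0] using h2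
    have hσjj : σ k j j = ((s k:ℝ):ℂ) := by
      have h0 : 0 ≤ σ k j j := PD_diag_nonneg (hσ k) j
      rw [PD_nonneg_eq_abs h0, habs j j]
    have h1 : ((s k:ℝ):ℂ) • (τ k * V j) = σ k j i0 • (τ k * V i0) := by
      rw [← hσjj]; exact hKEY2 k j j i0
    have h2 : σ k i j • (τ k * V j) = σ k i i0 • (τ k * V i0) := hKEY2 k i j i0
    have hscal : (σ k i j * σ k j i0) • (τ k * V i0)
        = (((s k:ℝ):ℂ) * σ k i i0) • (τ k * V i0) := by
      rw [← smul_smul, ← h1, smul_smul, mul_comm (σ k i j), ← smul_smul, h2, smul_smul]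
    have hprod : σ k i j * σ k j i0 = ((s k:ℝ):ℂ) * σ k i i0 := PD_smul_cancel hscal hτV0
    have hEi : ((s k:ℝ):ℂ) * Complex.exp (((θ i k:ℝ):ℂ) * Complex.I) = σ k i i0 := by
      have h := Complex.norm_mul_exp_arg_mul_I (σ k i i0)
      rw [habs i i0] at h
      exact h
    have hEj : ((s k:ℝ):ℂ) * Complex.exp (((θ j k:ℝ):ℂ) * Complex.I) = σ k j i0 := by
      have h := Complex.norm_mul_exp_arg_mul_I (σ k j i0)
      rw [habs j i0] at h
      exact h
    have hexpj : Complex.exp (((θ j k:ℝ):ℂ) * Complex.I) ≠ 0 := Complex.exp_ne_zero _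
    have h3 : σ k i j * (((s k:ℝ):ℂ) * Complex.exp (((θ j k:ℝ):ℂ) * Complex.I))
        = ((s k:ℝ):ℂ) * (((s k:ℝ):ℂ) * Complex.exp (((θ i k:ℝ):ℂ) * Complex.I)) := by
      rw [hEj, hEi]; exact hprod
    have hfin : σ k i j
        = ((s k:ℝ):ℂ) * Complex.exp (Complex.I * (((θ i k:ℝ):ℂ) - ((θ j k:ℝ):ℂ))) := by
      rw [show Complex.I * (((θ i k:ℝ):ℂ) - ((θ j k:ℝ):ℂ))
          = ((θ i k:ℝ):ℂ) * Complex.I - ((θ j k:ℝ):ℂ) * Complex.I by ring,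
        Complex.exp_sub]
      field_simp
      apply mul_left_cancel₀ hsC
      rw [mul_comm Complex.I (((θ j k:ℝ):ℂ))]
      linear_combination h3
    rw [hfin]
  -- partial trace relation
  have htr : ∀ i j, (c:ℂ) * (c:ℂ) * (V i * ρE * (V j)ᴴ).trace
      = ∑ k, σ k i j * (τ k).trace := by
    intro i j
    have hent : ∀ a, (USE * (P ⊗ₖ ρE) * USEᴴ) (i,a) (j,a) = ∑ k, σ k i j * τ k a a := by
      intro a
      rw [heq]
      simp [Matrix.sum_apply, Matrix.kroneckerMap_apply]
    have h1 : ∑ a, (USE * (P ⊗ₖ ρE) * USEᴴ) (i,a) (j,a)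
        = (c:ℂ) * (c:ℂ) * (V i * ρE * (V j)ᴴ).trace := by
      simp only [hρent, Matrix.trace, Matrix.diag, Finset.mul_sum]
    rw [← h1]
    calc ∑ a, (USE * (P ⊗ₖ ρE) * USEᴴ) (i,a) (j,a) = ∑ a, ∑ k, σ k i j * τ k a a := by
          exact Finset.sum_congr rfl fun a _ => hent a
      _ = ∑ k, ∑ a, σ k i j * τ k a a := Finset.sum_comm
      _ = ∑ k, σ k i j * (τ k).trace := by
          refine Finset.sum_congr rfl fun k _ => ?_
          simp [Matrix.trace, Matrix.diag, Finset.mul_sum]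
  have hφdiag : ∀ i, (V i * ρE * (V i)ᴴ).trace = 1 := by
    intro i
    rw [Matrix.trace_mul_cycle, hVu i, Matrix.one_mul, htrE]
  have hdSC : ((dS:ℕ) : ℂ) ≠ 0 := by exact_mod_cast hdS.ne'
  have hccC : (c:ℂ) * (c:ℂ) = ((dS:ℕ):ℂ)⁻¹ := by
    rw [← Complex.ofReal_mul, hc2]
    push_cast
    ring
  -- final form
  have hform : ∀ i j, (V i * ρE * (V j)ᴴ).trace
      = ∑ k, (p k : ℂ) * Complex.exp (Complex.I * ((θ i k : ℝ) - (θ j k : ℝ))) := by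
    intro i j
    have h1 := htr i j
    rw [hccC] at h1
    have h2 : (V i * ρE * (V j)ᴴ).trace = ((dS:ℕ):ℂ) * ∑ k, σ k i j * (τ k).trace := by
      rw [← h1, ← mul_assoc, mul_inv_cancel₀ hdSC, one_mul]
    rw [h2, Finset.mul_sum]
    refine Finset.sum_congr rfl fun k _ => ?_
    rw [hCLAIM k i j, (htrτ k).1]
    rw [hp]
    push_cast
    ring
  have hp0 : ∀ k, 0 ≤ p k := by
    intro k
    rw [hp]
    exact mul_nonneg (Nat.cast_nonneg _)
      (mul_nonneg (by rw [hs]; exact norm_nonneg _) ((htrτ k).2))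
  have hp1C : (∑ k, ((p k : ℝ):ℂ)) = 1 := by
    have h := hform i0 i0
    rw [hφdiag i0] at h
    rw [h]
    refine Finset.sum_congr rfl fun k _ => ?_
    rw [sub_self, mul_zero, Complex.exp_zero, mul_one]
  have hp1 : ∑ k, p k = 1 := by
    have : ((∑ k, p k : ℝ) : ℂ) = 1 := by push_cast; exact hp1C
    exact_mod_cast this
  have hn1 : 1 ≤ n := by
    rcases Nat.eq_zero_or_pos n with h | h
    · subst h
      simp at hp1
    · exact h
  exact hNMU ⟨n, hn1, p, θ, hp0, hp1, hform⟩
end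

section
/- Let q > 0 be a real number, c₀, c₁, c₂, x ∈ ℂ, and θ, θ' ∈ ℝ. Then the determinant of the 3×3 complex matrix with rows [ |c₀|² q , c₁ (conj c₀) q e^{-iθ} , c₂ (conj c₀) q (conj x) ], [ c₀ (conj c₁) q e^{iθ} , |c₁|² q , c₂ (conj c₁) q e^{iθ'} (conj x) ], [ c₀ (conj c₂) q x , c₁ (conj c₂) q e^{-iθ'} x , |c₂|² q ] equals −2 |c₀ c₁ c₂|² q³ |x|² (1 − cos(θ − θ')). (Appendix B: the principal minor D_{(nm);(nm')} of the partially transposed joint state.) -/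
open Matrix

/-- **Appendix B.** The principal minor `D_{(nm);(nm')}` of the partially
transposed joint state equals `−2 |c₀ c₁ c₂|² q³ |x|² (1 − cos(θ − θ'))`. -/
theorem principal_minor_of_partial_transpose
    (q : ℝ) (hq : 0 < q) (c₀ c₁ c₂ x : ℂ) (θ θ' : ℝ) :
    Matrix.det
      !![((‖c₀‖ ^ 2 * q : ℝ) : ℂ),
          c₁ * (starRingEnd ℂ) c₀ * (q : ℂ) * Complex.exp (-(Complex.I * (θ : ℂ))),
          c₂ * (starRingEnd ℂ) c₀ * (q : ℂ) * (starRingEnd ℂ) x;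
        c₀ * (starRingEnd ℂ) c₁ * (q : ℂ) * Complex.exp (Complex.I * (θ : ℂ)),
          ((‖c₁‖ ^ 2 * q : ℝ) : ℂ),
          c₂ * (starRingEnd ℂ) c₁ * (q : ℂ) * Complex.exp (Complex.I * (θ' : ℂ)) *
            (starRingEnd ℂ) x;
        c₀ * (starRingEnd ℂ) c₂ * (q : ℂ) * x,
          c₁ * (starRingEnd ℂ) c₂ * (q : ℂ) * Complex.exp (-(Complex.I * (θ' : ℂ))) * x,
          ((‖c₂‖ ^ 2 * q : ℝ) : ℂ)]
      = ((-(2 * ‖c₀ * c₁ * c₂‖ ^ 2 * q ^ 3 * ‖x‖ ^ 2 *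
            (1 - Real.cos (θ - θ'))) : ℝ) : ℂ) := by
  have habs : ∀ z : ℂ, ((‖z‖ : ℝ) : ℂ) ^ 2 = z * (starRingEnd ℂ) z := by
    intro z
    rw [Complex.mul_conj, ← Complex.sq_norm]
    push_cast; ring
  have hcos : Complex.cos ((θ : ℂ) - (θ' : ℂ))
      = (Complex.exp (Complex.I * θ) * Complex.exp (-(Complex.I * θ'))
        + Complex.exp (-(Complex.I * θ)) * Complex.exp (Complex.I * θ')) / 2 := by
    rw [Complex.cos, ← Complex.exp_add, ← Complex.exp_add]
    ring_nf
  simp only [Matrix.det_fin_three, Matrix.of_apply, Matrix.cons_val', Matrix.cons_val_zero,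
    Matrix.cons_val_one, Matrix.cons_val_two, Matrix.tail_cons, Matrix.head_cons,
    Matrix.empty_val', Matrix.cons_val_fin_one, Matrix.head_fin_const]
  push_cast
  simp only [habs, hcos]
  simp only [_root_.map_mul, Complex.exp_neg]
  field_simp [Complex.exp_ne_zero]
  ring
end

section
/- Let d_E be a positive integer, let ρ_E be a d_E×d_E complex positive semidefinite matrix with trace 1, and let V i (for i : Fin 3) be unitary d_E×d_E complex matrices satisfying the qubit-like condition V i * ρ_E * (V i)ᴴ = R for all i. Suppose the corrected qutrit-like condition fails for the pair of operators Y₀₁ = V 0 * (V 1)ᴴ and Y₀₂ = V 0 * (V 2)ᴴ, i.e. R * (Y₀₁ * Y₀₂ − Y₀₂ * Y₀₁) * R ≠ 0. Then for every unit vector ψ : Fin 3 → ℂ with ψ 0 ≠ 0, ψ 1 ≠ 0, ψ 2 ≠ 0, the partial transpose over the system of the evolved joint state, (U_SE * ((Matrix.vecMulVec ψ (star ψ)) ⊗ₖ ρ_E) * U_SEᴴ)^{T_S}, is not positive semidefinite; in particular the evolved joint state is entangled (not separable). (Appendix B: failure of the corrected qutrit-like condition produces a negative principal minor of the partial transpose.)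 -/
open Matrix ComplexOrder Kronecker

/-- Partial transpose over the system `S` of a matrix indexed by
`Fin 3 × Fin dE`. -/
def partialTransposeS (dE : ℕ)
    (M : Matrix (Fin 3 × Fin dE) (Fin 3 × Fin dE) ℂ) :
    Matrix (Fin 3 × Fin dE) (Fin 3 × Fin dE) ℂ :=
  fun p q => M (q.1, p.2) (p.1, q.2)

/-- A positive semidefinite matrix indexed by `Fin 3 × Fin dE` is separable
if it is a finite sum of Kronecker products of positive semidefinite
matrices. -/
def SeparableState3 (dE : ℕ)
    (ρ : Matrix (Fin 3 × Fin dE) (Fin 3 × Fin dE) ℂ) : Prop :=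
  ∃ (n : ℕ) (σ : Fin n → Matrix (Fin 3) (Fin 3) ℂ)
    (τ : Fin n → Matrix (Fin dE) (Fin dE) ℂ),
    (∀ k, (σ k).PosSemidef) ∧ (∀ k, (τ k).PosSemidef) ∧
    ρ = ∑ k, (σ k) ⊗ₖ (τ k)

lemma pt_sum {dE n : ℕ} (f : Fin n → Matrix (Fin 3 × Fin dE) (Fin 3 × Fin dE) ℂ) :
    partialTransposeS dE (∑ k, f k) = ∑ k, partialTransposeS dE (f k) := by
  ext p q
  simp only [partialTransposeS, Matrix.sum_apply, Finset.sum_apply]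

lemma pt_kron {dE : ℕ} (σ : Matrix (Fin 3) (Fin 3) ℂ) (τ : Matrix (Fin dE) (Fin dE) ℂ) :
    partialTransposeS dE (σ ⊗ₖ τ) = σᵀ ⊗ₖ τ := by
  ext p q
  simp [partialTransposeS, Matrix.kroneckerMap_apply]

lemma kron_conjTranspose {dE : ℕ} (σ : Matrix (Fin 3) (Fin 3) ℂ)
    (τ : Matrix (Fin dE) (Fin dE) ℂ) : (σ ⊗ₖ τ)ᴴ = σᴴ ⊗ₖ τᴴ := by
  ext p q
  simp [Matrix.conjTranspose_apply, Matrix.kroneckerMap_apply]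

lemma kron_psd {dE : ℕ} {σ : Matrix (Fin 3) (Fin 3) ℂ} {τ : Matrix (Fin dE) (Fin dE) ℂ}
    (hσ : σ.PosSemidef) (hτ : τ.PosSemidef) : (σ ⊗ₖ τ).PosSemidef := by
  obtain ⟨X, hX⟩ : ∃ X : Matrix (Fin 3) (Fin 3) ℂ, σ = Xᴴ * X := by
    open scoped MatrixOrder in
    obtain ⟨X, hX⟩ := CStarAlgebra.nonneg_iff_eq_star_mul_self.mp hσ.nonneg
    exact ⟨X, hX⟩
  obtain ⟨Y, hY⟩ : ∃ Y : Matrix (Fin dE) (Fin dE) ℂ, τ = Yᴴ * Y := by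
    open scoped MatrixOrder in
    obtain ⟨Y, hY⟩ := CStarAlgebra.nonneg_iff_eq_star_mul_self.mp hτ.nonneg
    exact ⟨Y, hY⟩
  rw [hX, hY]
  rw [show (Xᴴ * X) ⊗ₖ (Yᴴ * Y) = (Xᴴ ⊗ₖ Yᴴ) * (X ⊗ₖ Y) from
    Matrix.mul_kronecker_mul _ _ _ _, ← kron_conjTranspose]
  exact Matrix.posSemidef_conjTranspose_mul_self _

lemma sep_pt_psd {dE : ℕ} {ρ : Matrix (Fin 3 × Fin dE) (Fin 3 × Fin dE) ℂ}
    (h : SeparableState3 dE ρ) : (partialTransposeS dE ρ).PosSemidef := by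
  obtain ⟨n, σ, τ, hσ, hτ, rfl⟩ := h
  rw [pt_sum]
  refine Finset.sum_induction _ _ (fun a b ha hb => ha.add hb) Matrix.PosSemidef.zero ?_
  intro k _
  rw [pt_kron]
  exact kron_psd (hσ k).transpose (hτ k)

lemma dotShift {dE : ℕ} (P T : Matrix (Fin dE) (Fin dE) ℂ) (a u : Fin dE → ℂ) :
    star (Pᴴ *ᵥ a) ⬝ᵥ (T *ᵥ u) = star a ⬝ᵥ ((P * T) *ᵥ u) := by
  rw [Matrix.star_mulVec, Matrix.conjTranspose_conjTranspose,
    ← Matrix.dotProduct_mulVec, Matrix.mulVec_mulVec]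

lemma dot_single {dE : ℕ} (N : Matrix (Fin dE) (Fin dE) ℂ) (f g : Fin dE) :
    star (Pi.single f (1:ℂ)) ⬝ᵥ (N *ᵥ Pi.single g 1) = N f g := by
  simp [dotProduct, Matrix.mulVec_single, Pi.single_apply,
    apply_ite (star : ℂ → ℂ), ite_mul, mul_ite, Finset.sum_ite_eq]


/-- **Appendix B.** If the qubit-like condition holds but the corrected
qutrit-like condition fails for `Y₀₁ = V 0 (V 1)ᴴ` and `Y₀₂ = V 0 (V 2)ᴴ`,
then for every initial pure qutrit state with all three amplitudes nonzero,
the partial transpose of the evolved joint state is not positive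
semidefinite; in particular the evolved joint state is entangled. -/
theorem qutritLike_violation_implies_entanglement
    (dE : ℕ) (hdE : 0 < dE)
    (ρE : Matrix (Fin dE) (Fin dE) ℂ)
    (hρE : ρE.PosSemidef) (htrE : ρE.trace = 1)
    (V : Fin 3 → Matrix (Fin dE) (Fin dE) ℂ)
    (hV : ∀ i, V i ∈ Matrix.unitaryGroup (Fin dE) ℂ)
    (R : Matrix (Fin dE) (Fin dE) ℂ)
    (hqb : ∀ i : Fin 3, V i * ρE * (V i)ᴴ = R)
    (hviol : R * ((V 0 * (V 1)ᴴ) * (V 0 * (V 2)ᴴ)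
                    - (V 0 * (V 2)ᴴ) * (V 0 * (V 1)ᴴ)) * R ≠ 0)
    (USE : Matrix (Fin 3 × Fin dE) (Fin 3 × Fin dE) ℂ)
    (hUSE : USE = ∑ i : Fin 3, (Matrix.single i i (1 : ℂ)) ⊗ₖ (V i)) :
    ∀ ψ : Fin 3 → ℂ, (∑ i, ‖ψ i‖ ^ 2 = 1) →
      ψ 0 ≠ 0 → ψ 1 ≠ 0 → ψ 2 ≠ 0 →
      ¬ (partialTransposeS dE
            (USE * ((Matrix.vecMulVec ψ (star ψ)) ⊗ₖ ρE) * USEᴴ)).PosSemidef ∧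
      ¬ SeparableState3 dE (USE * ((Matrix.vecMulVec ψ (star ψ)) ⊗ₖ ρE) * USEᴴ) := by
  intro ψ hψ h0 h1 h2
  suffices hPT : ¬ (partialTransposeS dE
      (USE * ((Matrix.vecMulVec ψ (star ψ)) ⊗ₖ ρE) * USEᴴ)).PosSemidef by
    exact ⟨hPT, fun hs => hPT (sep_pt_psd hs)⟩
  intro hPSD
  -- unitarity facts
  have hu : ∀ i, (V i)ᴴ * V i = 1 := by
    intro i
    have := (Matrix.mem_unitaryGroup_iff').mp (hV i)
    rwa [Matrix.star_eq_conjTranspose] at this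
  have hu' : ∀ i, V i * (V i)ᴴ = 1 := by
    intro i
    have := (Matrix.mem_unitaryGroup_iff).mp (hV i)
    rwa [Matrix.star_eq_conjTranspose] at this
  have hc : ∀ i (X : Matrix (Fin dE) (Fin dE) ℂ), (V i)ᴴ * (V i * X) = X := by
    intro i X; rw [← Matrix.mul_assoc, hu, Matrix.one_mul]
  -- entries of USE
  have hUe : ∀ (i : Fin 3) (e : Fin dE) (k : Fin 3) (g : Fin dE),
      USE (i,e) (k,g) = if i = k then V i e g else 0 := by
    intro i e k g
    rw [hUSE]
    simp only [Matrix.sum_apply, Matrix.kroneckerMap_apply, Matrix.single]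
    by_cases h : i = k
    · subst h
      simp only [Matrix.of_apply, and_self]
      rw [Finset.sum_eq_single i]
      · simp
      · intro m _ hm; simp [hm]
      · simp
    · rw [if_neg h]
      apply Finset.sum_eq_zero
      intro m _
      simp only [Matrix.of_apply]
      rw [if_neg, zero_mul]
      rintro ⟨rfl, rfl⟩; exact h rfl
  -- entries of the evolved state
  have hEntry : ∀ (i j : Fin 3) (e f : Fin dE),
      (USE * ((Matrix.vecMulVec ψ (star ψ)) ⊗ₖ ρE) * USEᴴ) (i,e) (j,f)
        = ψ i * (starRingEnd ℂ) (ψ j) * ((V i * ρE * (V j)ᴴ) e f) := by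
    intro i j e f
    simp only [Matrix.mul_apply, Matrix.conjTranspose_apply, Fintype.sum_prod_type,
      hUe, Matrix.kroneckerMap_apply, Matrix.vecMulVec_apply, Pi.star_apply,
      ite_mul, zero_mul, mul_ite, mul_zero, apply_ite (star : ℂ → ℂ), star_zero,
      Finset.sum_ite_irrel, Finset.sum_const_zero,
      Finset.sum_ite_eq, Finset.mem_univ, if_true]
    rw [Finset.mul_sum]
    refine Finset.sum_congr rfl fun h _ => ?_
    simp only [Finset.sum_mul, Finset.mul_sum]
    refine Finset.sum_congr rfl fun g _ => ?_
    push_cast [RCLike.star_def]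
    ring
  -- entries of the partial transpose
  have hMpt : ∀ (i j : Fin 3) (e f : Fin dE),
      (partialTransposeS dE
        (USE * ((Matrix.vecMulVec ψ (star ψ)) ⊗ₖ ρE) * USEᴴ)) (i,e) (j,f)
        = ψ j * (starRingEnd ℂ) (ψ i) * ((V j * ρE * (V i)ᴴ) e f) := by
    intro i j e f
    exact hEntry j i e f
  -- quadratic form expansion
  have hquad : ∀ (c : Fin 3 → ℂ) (w : Fin 3 → Fin dE → ℂ),
      star (fun p : Fin 3 × Fin dE => c p.1 * w p.1 p.2) ⬝ᵥ
        (partialTransposeS dE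
          (USE * ((Matrix.vecMulVec ψ (star ψ)) ⊗ₖ ρE) * USEᴴ)) *ᵥ
        (fun p : Fin 3 × Fin dE => c p.1 * w p.1 p.2)
      = ∑ i : Fin 3, ∑ j : Fin 3, (starRingEnd ℂ) (ψ i * c i) * (ψ j * c j) *
          (star (w i) ⬝ᵥ ((V j * ρE * (V i)ᴴ) *ᵥ w j)) := by
    intro c w
    simp only [dotProduct, Matrix.mulVec, Fintype.sum_prod_type, Pi.star_apply,
      Finset.mul_sum, Finset.sum_mul]
    refine Finset.sum_congr rfl fun i _ => ?_
    rw [Finset.sum_comm]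
    refine Finset.sum_congr rfl fun j _ => ?_
    refine Finset.sum_congr rfl fun e _ => ?_
    refine Finset.sum_congr rfl fun f _ => ?_
    rw [hMpt]
    simp only [RCLike.star_def, _root_.map_mul]
    ring
  -- abbreviations
  set A : Matrix (Fin dE) (Fin dE) ℂ := V 1 * (V 0)ᴴ with hA
  set B : Matrix (Fin dE) (Fin dE) ℂ := V 2 * (V 0)ᴴ with hB
  have hAH : Aᴴ = V 0 * (V 1)ᴴ := by
    rw [hA, Matrix.conjTranspose_mul, Matrix.conjTranspose_conjTranspose]
  have hBH : Bᴴ = V 0 * (V 2)ᴴ := by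
    rw [hB, Matrix.conjTranspose_mul, Matrix.conjTranspose_conjTranspose]
  set D : Matrix (Fin dE) (Fin dE) ℂ := A * ((V 2 * ρE * (V 1)ᴴ) * Bᴴ) with hD
  have hρEH : ρEᴴ = ρE := hρE.1
  have hRH : Rᴴ = R := by
    rw [← hqb 0]
    simp only [Matrix.conjTranspose_mul, Matrix.conjTranspose_conjTranspose, hρEH,
      Matrix.mul_assoc]
  -- the matrix identities
  have e01 : (V 1 * ρE * (V 0)ᴴ) * Aᴴ = R := by
    rw [hAH]
    simp only [Matrix.mul_assoc, hc]
    rw [← Matrix.mul_assoc, hqb]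
  have e10 : A * (V 0 * ρE * (V 1)ᴴ) = R := by
    rw [hA]
    simp only [Matrix.mul_assoc, hc]
    rw [← Matrix.mul_assoc, hqb]
  have e11 : A * ((V 1 * ρE * (V 1)ᴴ) * Aᴴ) = R := by
    rw [hqb 1, ← hqb 0, hA, hAH]
    simp only [Matrix.mul_assoc, hc]
    simp only [← Matrix.mul_assoc, hqb]
  have e02 : (V 2 * ρE * (V 0)ᴴ) * Bᴴ = R := by
    rw [hBH]
    simp only [Matrix.mul_assoc, hc]
    rw [← Matrix.mul_assoc, hqb]
  have e20 : B * (V 0 * ρE * (V 2)ᴴ) = R := by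
    rw [hB]
    simp only [Matrix.mul_assoc, hc]
    rw [← Matrix.mul_assoc, hqb]
  have e22 : B * ((V 2 * ρE * (V 2)ᴴ) * Bᴴ) = R := by
    rw [hqb 2, ← hqb 0, hB, hBH]
    simp only [Matrix.mul_assoc, hc]
    simp only [← Matrix.mul_assoc, hqb]
  have e21 : B * ((V 1 * ρE * (V 2)ᴴ) * Aᴴ) = Dᴴ := by
    rw [hD]
    simp only [Matrix.conjTranspose_mul, Matrix.conjTranspose_conjTranspose, hρEH,
      Matrix.mul_assoc]
  -- key quadratic-form inequality
  have hQ : ∀ a b : Fin dE → ℂ,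
      0 ≤ star b ⬝ᵥ (R *ᵥ b) + star a ⬝ᵥ ((R - D) *ᵥ b)
          + star b ⬝ᵥ ((R - Dᴴ) *ᵥ a) := by
    intro a b
    have hx := hPSD.dotProduct_mulVec_nonneg (fun p : Fin 3 × Fin dE =>
      (![(ψ 0)⁻¹, -(ψ 1)⁻¹, (ψ 2)⁻¹] : Fin 3 → ℂ) p.1 *
      (![a, Aᴴ *ᵥ a, Bᴴ *ᵥ b] : Fin 3 → (Fin dE → ℂ)) p.1 p.2)
    rw [hquad] at hx
    have hs00 : star a ⬝ᵥ ((V 0 * ρE * (V 0)ᴴ) *ᵥ a) = star a ⬝ᵥ (R *ᵥ a) := by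
      rw [hqb]
    have hs01 : star a ⬝ᵥ ((V 1 * ρE * (V 0)ᴴ) *ᵥ (Aᴴ *ᵥ a)) = star a ⬝ᵥ (R *ᵥ a) := by
      rw [Matrix.mulVec_mulVec, e01]
    have hs02 : star a ⬝ᵥ ((V 2 * ρE * (V 0)ᴴ) *ᵥ (Bᴴ *ᵥ b)) = star a ⬝ᵥ (R *ᵥ b) := by
      rw [Matrix.mulVec_mulVec, e02]
    have hs10 : star (Aᴴ *ᵥ a) ⬝ᵥ ((V 0 * ρE * (V 1)ᴴ) *ᵥ a) = star a ⬝ᵥ (R *ᵥ a) := by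
      rw [dotShift, e10]
    have hs11 : star (Aᴴ *ᵥ a) ⬝ᵥ ((V 1 * ρE * (V 1)ᴴ) *ᵥ (Aᴴ *ᵥ a))
        = star a ⬝ᵥ (R *ᵥ a) := by
      rw [Matrix.mulVec_mulVec, dotShift, e11]
    have hs12 : star (Aᴴ *ᵥ a) ⬝ᵥ ((V 2 * ρE * (V 1)ᴴ) *ᵥ (Bᴴ *ᵥ b))
        = star a ⬝ᵥ (D *ᵥ b) := by
      rw [Matrix.mulVec_mulVec, dotShift, ← hD]
    have hs20 : star (Bᴴ *ᵥ b) ⬝ᵥ ((V 0 * ρE * (V 2)ᴴ) *ᵥ a) = star b ⬝ᵥ (R *ᵥ a) := by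
      rw [dotShift, e20]
    have hs21 : star (Bᴴ *ᵥ b) ⬝ᵥ ((V 1 * ρE * (V 2)ᴴ) *ᵥ (Aᴴ *ᵥ a))
        = star b ⬝ᵥ (Dᴴ *ᵥ a) := by
      rw [Matrix.mulVec_mulVec, dotShift, e21]
    have hs22 : star (Bᴴ *ᵥ b) ⬝ᵥ ((V 2 * ρE * (V 2)ᴴ) *ᵥ (Bᴴ *ᵥ b))
        = star b ⬝ᵥ (R *ᵥ b) := by
      rw [Matrix.mulVec_mulVec, dotShift, e22]
    rw [Fin.sum_univ_three] at hx
    simp only [Fin.sum_univ_three, Matrix.cons_val_zero, Matrix.cons_val_one,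
      Matrix.head_cons, Matrix.cons_val_two, Matrix.tail_cons] at hx
    rw [hs00, hs01, hs02, hs10, hs11, hs12, hs20, hs21, hs22] at hx
    simp only [mul_inv_cancel₀ h0, mul_inv_cancel₀ h1, mul_inv_cancel₀ h2,
      mul_neg, map_neg, _root_.map_one, neg_mul, one_mul, mul_one, neg_neg] at hx
    calc (0:ℂ) ≤ _ := hx
      _ = star b ⬝ᵥ (R *ᵥ b) + star a ⬝ᵥ ((R - D) *ᵥ b)
          + star b ⬝ᵥ ((R - Dᴴ) *ᵥ a) := by
        simp only [Matrix.sub_mulVec, dotProduct_sub]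
        ring
  -- conjugate-pair relation
  have hconjpair : ∀ (a b : Fin dE → ℂ),
      star a ⬝ᵥ ((R - D) *ᵥ b) = (starRingEnd ℂ) (star b ⬝ᵥ ((R - Dᴴ) *ᵥ a)) := by
    intro a b
    have hN : (R - Dᴴ)ᴴ = R - D := by
      rw [Matrix.conjTranspose_sub, hRH, Matrix.conjTranspose_conjTranspose]
    calc star a ⬝ᵥ ((R - D) *ᵥ b)
        = star a ⬝ᵥ ((R - Dᴴ)ᴴ *ᵥ b) := by rw [hN]
      _ = (star a ᵥ* (R - Dᴴ)ᴴ) ⬝ᵥ b := Matrix.dotProduct_mulVec _ _ _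
      _ = star ((R - Dᴴ) *ᵥ a) ⬝ᵥ b := by rw [Matrix.star_mulVec]
      _ = star ((R - Dᴴ) *ᵥ a) ⬝ᵥ star (star b) := by rw [star_star]
      _ = star (star b ⬝ᵥ ((R - Dᴴ) *ᵥ a)) := Matrix.star_dotProduct_star _ _
  -- the off-diagonal part must vanish
  have hzero : ∀ a b : Fin dE → ℂ, star b ⬝ᵥ ((R - Dᴴ) *ᵥ a) = 0 := by
    intro a b
    by_contra hs
    have hts : ∀ t : ℂ,
        0 ≤ star b ⬝ᵥ (R *ᵥ b)
          + ((starRingEnd ℂ) t * (starRingEnd ℂ) (star b ⬝ᵥ ((R - Dᴴ) *ᵥ a))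
          + t * (star b ⬝ᵥ ((R - Dᴴ) *ᵥ a))) := by
      intro t
      have h := hQ (t • a) b
      rw [hconjpair] at h
      simpa only [Matrix.mulVec_smul, dotProduct_smul, smul_eq_mul,
        _root_.map_mul, add_assoc] using h
    set s := star b ⬝ᵥ ((R - Dᴴ) *ᵥ a) with hsdef
    set r := star b ⬝ᵥ (R *ᵥ b) with hrdef
    have hr0 : 0 ≤ r := by simpa using hts 0
    have hts' := hts (-(((r.re + 1 : ℝ)) : ℂ) / s)
    have htmul : (-(((r.re + 1 : ℝ)) : ℂ) / s) * s = -((r.re + 1 : ℝ) : ℂ) :=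
      div_mul_cancel₀ _ hs
    have hconjt : (starRingEnd ℂ) (-(((r.re + 1 : ℝ)) : ℂ) / s) * (starRingEnd ℂ) s
        = -((r.re + 1 : ℝ) : ℂ) := by
      rw [← _root_.map_mul, htmul, map_neg, Complex.conj_ofReal]
    rw [htmul, hconjt] at hts'
    rw [Complex.le_def] at hts' hr0
    have h1 := hts'.1
    have h2 := hr0.1
    simp only [Complex.add_re, Complex.neg_re, Complex.ofReal_re, Complex.zero_re] at h1 h2
    linarith
  -- hence R = Dᴴ
  have hRD : R = Dᴴ := by
    have hN : R - Dᴴ = 0 := by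
      ext f g
      have := hzero (Pi.single g 1) (Pi.single f 1)
      rw [dot_single] at this
      simpa using this
    exact sub_eq_zero.mp hN
  -- final algebra: derive the commutation relation, contradicting hviol
  have hAu : Aᴴ * A = 1 := by
    rw [hAH, hA]
    simp only [Matrix.mul_assoc, hc]
    exact hu' 0
  have hBu : Bᴴ * B = 1 := by
    rw [hBH, hB]
    simp only [Matrix.mul_assoc, hc]
    exact hu' 0
  have hcA : ∀ X : Matrix (Fin dE) (Fin dE) ℂ, Aᴴ * (A * X) = X := by
    intro X; rw [← Matrix.mul_assoc, hAu, Matrix.one_mul]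
  have hW : V 1 * ρE * (V 2)ᴴ = R * (A * Bᴴ) := by
    rw [← hqb 1, hA, hBH]
    simp only [Matrix.mul_assoc, hc]
  have hBR : B * R = R * B := by
    have hx1 : B * R = V 2 * (ρE * (V 0)ᴴ) := by
      rw [← hqb 0, hB]
      simp only [Matrix.mul_assoc, hc]
    have hx2 : R * B = V 2 * (ρE * (V 0)ᴴ) := by
      rw [← hqb 2, hB]
      simp only [Matrix.mul_assoc, hc]
    rw [hx1, hx2]
  have h' : R = R * B * A * Bᴴ * Aᴴ := by
    calc R = B * (V 1 * ρE * (V 2)ᴴ * Aᴴ) := hRD.trans e21.symm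
      _ = B * (R * (A * Bᴴ) * Aᴴ) := by rw [hW]
      _ = B * R * (A * (Bᴴ * Aᴴ)) := by simp only [Matrix.mul_assoc]
      _ = R * B * (A * (Bᴴ * Aᴴ)) := by rw [hBR]
      _ = R * B * A * Bᴴ * Aᴴ := by simp only [Matrix.mul_assoc]
  have hcomm : R * (A * B) = R * (B * A) := by
    conv_lhs => rw [h']
    simp only [Matrix.mul_assoc, hcA, hBu, Matrix.mul_one]
  have hcommH : Bᴴ * (Aᴴ * R) = Aᴴ * (Bᴴ * R) := by
    have := congrArg Matrix.conjTranspose hcomm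
    simpa only [Matrix.conjTranspose_mul, hRH, Matrix.mul_assoc] using this
  apply hviol
  rw [← hAH, ← hBH, Matrix.mul_sub, Matrix.sub_mul]
  rw [sub_eq_zero]
  simp only [Matrix.mul_assoc]
  rw [hcommH]
end

section
/- Let σ_x, σ_y be the standard 2×2 Pauli matrices over ℂ, let n̂₂·σ⃗ = −(√3/2) • σ_x − (1/2) • σ_y, and let e₀ = (1,0) be the first standard basis vector of ℂ². For t ∈ ℝ define the unitaries V₀₁(t) = exp(−i t σ_y) and V₁₁(t) = exp(−i t (n̂₂·σ⃗)) (matrix exponentials). Then the dephasing factor of the experimental model with environment state ρ_E = |0⟩⟨0| satisfies Trace(V₀₁(t) * (Matrix.vecMulVec e₀ (star e₀)) * (V₁₁(t))ᴴ) = cos²t − (1/2) sin²t − i (√3/2) sin²t; in particular its real part is cos²t − (1/2) sin²t and the absolute value of its imaginary part is (√3/2) sin²t. -/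
open Matrix

lemma exp_of_conj (U V A : Matrix (Fin 2) (Fin 2) ℂ) (d : Fin 2 → ℂ)
    (hUV : U * V = 1) (hVU : V * U = 1) (hA : A = U * Matrix.diagonal d * V) :
    NormedSpace.exp A = U * Matrix.diagonal (fun i => Complex.exp (d i)) * V := by
  set u : (Matrix (Fin 2) (Fin 2) ℂ)ˣ := ⟨U, V, hUV, hVU⟩ with hu
  have h1 : (u : Matrix (Fin 2) (Fin 2) ℂ) = U := rfl
  have h2 : ((u⁻¹ : _ˣ) : Matrix (Fin 2) (Fin 2) ℂ) = V := rfl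
  have h := Matrix.exp_units_conj u (Matrix.diagonal d)
  rw [h1, h2, ← hA] at h
  have hd : NormedSpace.exp d = fun i => Complex.exp (d i) := by
    rw [Pi.exp_def]; funext i
    exact (congrFun Complex.exp_eq_exp_ℂ (d i)).symm
  rw [h, Matrix.exp_diagonal, hd]

lemma diag_two (x y : ℂ) : Matrix.diagonal ![x, y] = !![x, 0; 0, y] := by
  ext i j; fin_cases i <;> fin_cases j <;> simp [Matrix.diagonal]

lemma exp_of_conj' (U V A : Matrix (Fin 2) (Fin 2) ℂ) (x y : ℂ)
    (hUV : U * V = 1) (hVU : V * U = 1) (hA : A = U * !![x, 0; 0, y] * V) :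
    NormedSpace.exp A = U * !![Complex.exp x, 0; 0, Complex.exp y] * V := by
  have h := exp_of_conj U V A ![x, y] hUV hVU (by rw [diag_two]; exact hA)
  rw [h]; congr 1; congr 1
  rw [show (fun i => Complex.exp (![x, y] i)) = ![Complex.exp x, Complex.exp y] by
    funext i; fin_cases i <;> simp]
  exact diag_two _ _

/-- exp of z • (an involutive off-diagonal matrix) -/
lemma exp_offdiag (z a b : ℂ) (hab : a * b = 1) :
    NormedSpace.exp (z • !![(0:ℂ), a; b, 0]) =
      !![(Complex.exp z + Complex.exp (-z))/2, a * (Complex.exp z - Complex.exp (-z))/2;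
         b * (Complex.exp z - Complex.exp (-z))/2, (Complex.exp z + Complex.exp (-z))/2] := by
  rw [exp_of_conj' !![a, a; 1, -1] !![b/2, 1/2; b/2, -1/2] _ z (-z)
      (by ext i j; fin_cases i <;> fin_cases j <;>
        simp [Matrix.mul_apply, Fin.sum_univ_two] <;> (first
        | ring1
        | linear_combination hab
        | linear_combination -hab
        | linear_combination hab/2
        | linear_combination -hab/2
        | linear_combination ((Complex.exp z + Complex.exp (-z))/2) * hab
        | linear_combination (-(Complex.exp z + Complex.exp (-z))/2) * hab))
      (by ext i j; fin_cases i <;> fin_cases j <;>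
        simp [Matrix.mul_apply, Fin.sum_univ_two] <;> (first
        | ring1
        | linear_combination hab
        | linear_combination -hab
        | linear_combination hab/2
        | linear_combination -hab/2
        | linear_combination ((Complex.exp z + Complex.exp (-z))/2) * hab
        | linear_combination (-(Complex.exp z + Complex.exp (-z))/2) * hab))
      (by ext i j; fin_cases i <;> fin_cases j <;>
        simp [Matrix.mul_apply, Fin.sum_univ_two] <;> (first
        | ring1
        | linear_combination hab
        | linear_combination -hab
        | linear_combination hab/2
        | linear_combination -hab/2
        | linear_combination ((Complex.exp z + Complex.exp (-z))/2) * hab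
        | linear_combination (-(Complex.exp z + Complex.exp (-z))/2) * hab))]
  ext i j
  fin_cases i <;> fin_cases j <;>
    simp [Matrix.mul_apply, Fin.sum_univ_two] <;> (first
        | ring1
        | linear_combination hab
        | linear_combination -hab
        | linear_combination hab/2
        | linear_combination -hab/2
        | linear_combination ((Complex.exp z + Complex.exp (-z))/2) * hab
        | linear_combination (-(Complex.exp z + Complex.exp (-z))/2) * hab)

/-- **Dephasing factor of the experimental model (Eq. (23)).** With
`σ_y`-rotation `V₀₁(t) = exp(−i t σ_y)` and `V₁₁(t) = exp(−i t (n̂₂·σ⃗))`,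
`n̂₂·σ⃗ = −(√3/2) σ_x − (1/2) σ_y`, and environment state `|0⟩⟨0|`, the
dephasing factor is `cos²t − (1/2) sin²t − i (√3/2) sin²t`. -/
theorem dephasing_factor_trapped_ion_model (t : ℝ) :
    let σx : Matrix (Fin 2) (Fin 2) ℂ := !![0, 1; 1, 0]
    let σy : Matrix (Fin 2) (Fin 2) ℂ := !![0, -Complex.I; Complex.I, 0]
    let n₂σ : Matrix (Fin 2) (Fin 2) ℂ :=
      (-((Real.sqrt 3 / 2 : ℝ) : ℂ)) • σx - ((1 / 2 : ℝ) : ℂ) • σy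
    let e₀ : Fin 2 → ℂ := ![1, 0]
    let V₀₁ : Matrix (Fin 2) (Fin 2) ℂ :=
      NormedSpace.exp ((-(Complex.I * (t : ℂ))) • σy)
    let V₁₁ : Matrix (Fin 2) (Fin 2) ℂ :=
      NormedSpace.exp ((-(Complex.I * (t : ℂ))) • n₂σ)
    let φ : ℂ := (V₀₁ * (Matrix.vecMulVec e₀ (star e₀)) * V₁₁ᴴ).trace
    φ = ((Real.cos t : ℂ)) ^ 2 - (1 / 2 : ℂ) * ((Real.sin t : ℂ)) ^ 2
          - Complex.I * ((Real.sqrt 3 / 2 : ℝ) : ℂ) * ((Real.sin t : ℂ)) ^ 2 ∧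
    φ.re = Real.cos t ^ 2 - (1 / 2) * Real.sin t ^ 2 ∧
    |φ.im| = (Real.sqrt 3 / 2) * Real.sin t ^ 2 := by
  intro σx σy n₂σ e₀ V₀₁ V₁₁ φ
  have hp : Complex.exp (-(Complex.I * t)) = (Real.cos t : ℂ) - (Real.sin t : ℂ) * Complex.I := by
    rw [show -(Complex.I * (t:ℂ)) = ((-t : ℝ):ℂ) * Complex.I by push_cast; ring,
      Complex.exp_mul_I, Complex.ofReal_neg, Complex.cos_neg, Complex.sin_neg,
      ← Complex.ofReal_cos, ← Complex.ofReal_sin]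
    ring
  have hq : Complex.exp (Complex.I * t) = (Real.cos t : ℂ) + (Real.sin t : ℂ) * Complex.I := by
    rw [mul_comm, Complex.exp_mul_I, ← Complex.ofReal_cos, ← Complex.ofReal_sin]
  set c : ℂ := (Real.cos t : ℂ) with hc
  set s : ℂ := (Real.sin t : ℂ) with hs
  set r : ℂ := ((Real.sqrt 3 : ℝ) : ℂ) with hr
  have h3 : r * r = 3 := by
    rw [hr, ← Complex.ofReal_mul, Real.mul_self_sqrt (by norm_num)]; norm_num
  set a : ℂ := -r/2 + Complex.I/2 with ha
  set b : ℂ := -r/2 - Complex.I/2 with hb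
  have h01 : V₀₁ = !![c, -s; s, c] := by
    show NormedSpace.exp ((-(Complex.I * (t : ℂ))) • !![(0:ℂ), -Complex.I; Complex.I, 0]) = _
    rw [exp_offdiag (-(Complex.I * t)) (-Complex.I) Complex.I
      (by linear_combination -Complex.I_mul_I)]
    ext i j
    fin_cases i <;> fin_cases j <;>
      simp [hp, hq] <;>
      (first
        | ring1
        | linear_combination (-s) * Complex.I_mul_I
        | linear_combination s * Complex.I_mul_I
        | linear_combination (2*s) * Complex.I_mul_I
        | linear_combination (-2*s) * Complex.I_mul_I)
  have hn : n₂σ = !![(0:ℂ), a; b, 0] := by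
    show (-((Real.sqrt 3 / 2 : ℝ) : ℂ)) • !![(0:ℂ), 1; 1, 0]
      - ((1 / 2 : ℝ) : ℂ) • !![(0:ℂ), -Complex.I; Complex.I, 0] = _
    ext i j
    fin_cases i <;> fin_cases j <;> simp [ha, hb, hr] <;> push_cast <;> ring
  have h11 : V₁₁ = !![c, -Complex.I * s * a; -Complex.I * s * b, c] := by
    show NormedSpace.exp ((-(Complex.I * (t : ℂ))) • n₂σ) = _
    rw [hn, exp_offdiag (-(Complex.I * t)) a b
      (by rw [ha, hb]; linear_combination h3/4 - Complex.I_mul_I/4)]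
    ext i j
    fin_cases i <;> fin_cases j <;> simp [hp, hq] <;> ring
  have hρ : Matrix.vecMulVec e₀ (star e₀) = !![(1:ℂ), 0; 0, 0] := by
    show Matrix.vecMulVec ![(1:ℂ), 0] (star ![(1:ℂ), 0]) = _
    ext i j
    fin_cases i <;> fin_cases j <;> simp [Matrix.vecMulVec_apply]
  have hφ : φ = c ^ 2 - (1/2 : ℂ) * s ^ 2 - Complex.I * (r/2) * s ^ 2 := by
    show (V₀₁ * (Matrix.vecMulVec e₀ (star e₀)) * V₁₁ᴴ).trace = _
    rw [h01, h11, hρ]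
    have hH : (!![c, -Complex.I * s * a; -Complex.I * s * b, c])ᴴ
        = !![c, Complex.I * s * a; Complex.I * s * b, c] := by
      ext i j
      fin_cases i <;> fin_cases j <;>
        simp [Matrix.conjTranspose_apply, ha, hb, hc, hs, hr, Complex.conj_ofReal,
          _root_.map_mul, map_neg, Complex.conj_I, -Complex.ofReal_cos,
          -Complex.ofReal_sin] <;> (try left) <;> (first | trivial | ring)
    rw [hH,
      show !![c, -s; s, c] * !![(1:ℂ), 0; 0, 0] = !![c, 0; s, 0] by
        ext i j; fin_cases i <;> fin_cases j <;> simp [Matrix.mul_apply, Fin.sum_univ_two],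
      show !![c, 0; s, 0] * !![c, Complex.I * s * a; Complex.I * s * b, c]
          = !![c * c, c * (Complex.I * s * a); s * c, s * (Complex.I * s * a)] by
        ext i j; fin_cases i <;> fin_cases j <;> simp [Matrix.mul_apply, Fin.sum_univ_two],
      Matrix.trace_fin_two]
    show c * c + s * (Complex.I * s * a) = _
    rw [ha]
    linear_combination (s ^ 2 / 2 : ℂ) * Complex.I_mul_I
  have hcast : ((Real.sqrt 3 / 2 : ℝ) : ℂ) = r / 2 := by push_cast; ring
  refine ⟨by rw [hφ, hcast], ?_, ?_⟩
  · have h' : φ = Complex.ofReal (Real.cos t ^ 2 - (1/2) * Real.sin t ^ 2)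
        + Complex.ofReal (-(Real.sqrt 3 / 2 * Real.sin t ^ 2)) * Complex.I := by
      rw [hφ, hc, hs, hr]; push_cast; ring
    rw [h']
    simp only [Complex.add_re, Complex.ofReal_re, Complex.mul_re, Complex.I_re, Complex.I_im,
      Complex.ofReal_im, mul_zero, mul_one, zero_mul, sub_zero, add_zero, zero_sub, neg_zero,
      zero_add]
  · have h' : φ = Complex.ofReal (Real.cos t ^ 2 - (1/2) * Real.sin t ^ 2)
        + Complex.ofReal (-(Real.sqrt 3 / 2 * Real.sin t ^ 2)) * Complex.I := by
      rw [hφ, hc, hs, hr]; push_cast; ring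
    rw [h']
    simp only [Complex.add_im, Complex.ofReal_im, Complex.mul_im, Complex.I_im, Complex.I_re,
      Complex.ofReal_re, mul_one, mul_zero, zero_add, add_zero]
    rw [abs_neg, abs_of_nonneg (by positivity)]
end
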